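/- arXiv:2203.01279 — 7 statements merged into one kernel-verified Lean document; each statement's English description precedes it below -/
import Mathlib

section
/- Let α > 0 and let E ⊂ ℝ² be a countable union of α-Lipschitz graphs over the x-axis. Then for every H¹-measurable subset A ⊂ E, H¹(A) ≤ √(1+α²) · ∫_ℝ #(A ∩ π₀⁻¹{t}) dt, where π₀ is the projection onto the x-axis. -/
open MeasureTheory Set Real
open scoped ENNReal NNReal

noncomputable section

abbrev Plane := EuclideanSpace ℝ (Fin 2)

def mk2 (a b : ℝ) : Plane := (WithLp.equiv 2 (Fin 2 → ℝ)).symm ![a, b]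

/-- Orthogonal projection onto direction (cos θ, sin θ). -/
def proj (θ : ℝ) (x : Plane) : ℝ := x 0 * Real.cos θ + x 1 * Real.sin θ

/-- Favard length. -/
def Fav (E : Set Plane) : ℝ≥0∞ := ∫⁻ θ in Set.Ioo 0 Real.pi, μH[1] (proj θ '' E)

open Function

/-!
Extend each graph to an entire Lipschitz graph `t ↦ (t, F t)`, which is a `√(1+α²)`-Lipschitz
section of the projection `π₀`. Cut `A` into the disjoint pieces it has on the successive graphs
(minus the earlier ones). The piece on the `n`-th graph is the image of a Borel set `Bₙ ⊆ ℝ`, so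
its `H¹`-measure is at most `√(1+α²) · |Bₙ|`. Summing, `∑ |Bₙ| = ∫ #{n | t ∈ Bₙ} dt`, and for each
`t` the points `(t, Fₙ t)` with `t ∈ Bₙ` are distinct points of `A ∩ π₀⁻¹{t}`.
-/

lemma dist_mk2 (a b c d : ℝ) : dist (mk2 a b) (mk2 c d) = √(dist a c ^ 2 + dist b d ^ 2) := by
  simp [EuclideanSpace.dist_eq, Fin.sum_univ_two, mk2]

lemma LipschitzWith.mk2_graph {K : ℝ≥0} {F : ℝ → ℝ} (hF : LipschitzWith K F) :
    LipschitzWith (NNReal.sqrt (1 + K ^ 2)) fun t => mk2 t (F t) := by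
  refine LipschitzWith.of_dist_le_mul fun t u => ?_
  have hFtu : dist (F t) (F u) ≤ K * dist t u := hF.dist_le_mul t u
  have hsq : dist (F t) (F u) ^ 2 ≤ (K * dist t u) ^ 2 := by gcongr
  calc dist (mk2 t (F t)) (mk2 u (F u)) = √(dist t u ^ 2 + dist (F t) (F u) ^ 2) := dist_mk2 ..
    _ ≤ √((1 + K ^ 2) * dist t u ^ 2) := Real.sqrt_le_sqrt (by nlinarith)
    _ = NNReal.sqrt (1 + K ^ 2) * dist t u := by
      rw [Real.sqrt_mul (by positivity), Real.sqrt_sq dist_nonneg, Real.coe_sqrt]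
      push_cast; rfl

lemma LipschitzWith.hausdorffMeasure_one_image_le {X : Type*} [EMetricSpace X]
    [MeasurableSpace X] [BorelSpace X] {K : ℝ≥0} {g : ℝ → X} (hg : LipschitzWith K g)
    (s : Set ℝ) : μH[1] (g '' s) ≤ K * volume s := by
  simpa [hausdorffMeasure_real] using hg.hausdorffMeasure_image_le zero_le_one s

lemma tsum_indicator_preimage_le_encard_fiber {X : Type*} {A : Set X} {D : ℕ → Set X}
    (hD : Pairwise (Disjoint on D)) (hDA : ∀ n, D n ⊆ A) {p : X → ℝ} {g : ℕ → ℝ → X}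
    (hpg : ∀ n, LeftInverse p (g n)) (t : ℝ) :
    ∑' n, (g n ⁻¹' D n).indicator 1 t ≤ ((A ∩ p ⁻¹' {t}).encard : ℝ≥0∞) := by
  set S : Set ℕ := {n | g n t ∈ D n}
  have hinj : InjOn (fun n => g n t) S := fun n hn m hm (hnm : g n t = g m t) =>
    hD.eq (not_disjoint_iff.2 ⟨g n t, hn, hnm ▸ hm⟩)
  have hsub : (fun n => g n t) '' S ⊆ A ∩ p ⁻¹' {t} := by
    rintro _ ⟨n, hn, rfl⟩
    exact ⟨hDA n hn, hpg n t⟩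
  calc ∑' n, (g n ⁻¹' D n).indicator 1 t = ∑' n : S, (1 : ℝ≥0∞) := by
        rw [tsum_subtype S fun _ => 1]
        exact tsum_congr fun n => by by_cases hn : n ∈ S <;> simp_all [S]
    _ = (((fun n => g n t) '' S).encard : ℝ≥0∞) := by
        rw [ENNReal.tsum_set_one, hinj.encard_image]
    _ ≤ _ := by exact_mod_cast encard_mono hsub

theorem hausdorffMeasure_le_mul_lintegral_encard_fiber {X : Type*} [EMetricSpace X]
    [MeasurableSpace X] [BorelSpace X] {K : ℝ≥0} {p : X → ℝ} {g : ℕ → ℝ → X}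
    (hp : Continuous p) (hg : ∀ n, LipschitzWith K (g n))
    (hpg : ∀ n, LeftInverse p (g n)) {A : Set X} (hA : MeasurableSet A)
    (hAg : A ⊆ ⋃ n, range (g n)) :
    μH[1] A ≤ K * ∫⁻ t, ((A ∩ p ⁻¹' {t}).encard : ℝ≥0∞) := by
  set C := disjointed fun n => range (g n)
  have hC : ∀ n, MeasurableSet (C n) := MeasurableSet.disjointed fun n =>
    ((hpg n).isClosed_range hp (hg n).continuous).measurableSet
  set B := fun n => g n ⁻¹' (A ∩ C n)
  have hB : ∀ n, MeasurableSet (B n) := fun n =>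
    (hA.inter (hC n)).preimage (hg n).continuous.measurable
  have hpiece : ∀ n, μH[1] (A ∩ C n) ≤ K * volume (B n) := fun n => by
    rw [← image_preimage_eq_of_subset (inter_subset_right.trans (disjointed_subset _ n))]
    exact (hg n).hausdorffMeasure_one_image_le _
  calc μH[1] A = μH[1] (⋃ n, A ∩ C n) := by
        rw [← inter_iUnion, iUnion_disjointed, inter_eq_left.2 hAg]
    _ ≤ ∑' n, μH[1] (A ∩ C n) := measure_iUnion_le _
    _ ≤ ∑' n, K * volume (B n) := ENNReal.tsum_le_tsum hpiece
    _ = K * ∫⁻ t, ∑' n, (B n).indicator 1 t := by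
        rw [lintegral_tsum fun n => (measurable_one.indicator (hB n)).aemeasurable,
          ENNReal.tsum_mul_left]
        simp_rw [lintegral_indicator_one (hB _)]
    _ ≤ K * ∫⁻ t, ((A ∩ p ⁻¹' {t}).encard : ℝ≥0∞) := by
        gcongr with t
        refine tsum_indicator_preimage_le_encard_fiber (fun i j hij => ?_)
          (fun n => inter_subset_left) hpg t
        exact (disjoint_disjointed _ hij).mono inter_subset_right inter_subset_right

theorem stmt3_general (α : ℝ) (f : ℕ → ℝ → ℝ) (s : ℕ → Set ℝ)
    (hf : ∀ n, LipschitzOnWith α.toNNReal (f n) (s n))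
    (E : Set Plane) (hE : E = ⋃ n, (fun t => mk2 t (f n t)) '' s n)
    (A : Set Plane) (hA : A ⊆ E) (hAm : MeasurableSet A) :
    μH[1] A ≤ ENNReal.ofReal (Real.sqrt (1 + α ^ 2)) *
      ∫⁻ t : ℝ, ((A ∩ {x : Plane | x 0 = t}).encard : ℝ≥0∞) := by
  choose F hF hfF using fun n => (hf n).extend_real
  have hAF : A ⊆ ⋃ n, range fun t => mk2 t (F n t) := by
    refine (hE ▸ hA).trans (iUnion_mono fun n => ?_)
    rintro _ ⟨t, ht, rfl⟩
    exact ⟨t, by simp only [hfF n ht]⟩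
  have hK : (NNReal.sqrt (1 + α.toNNReal ^ 2) : ℝ≥0∞) ≤ ENNReal.ofReal √(1 + α ^ 2) := by
    rw [← ENNReal.ofReal_coe_nnreal, Real.coe_sqrt]
    refine ENNReal.ofReal_le_ofReal (Real.sqrt_le_sqrt ?_)
    push_cast
    rw [Real.coe_toNNReal']
    rcases le_total α 0 with h | h <;> simp [h, sq_nonneg]
  exact (hausdorffMeasure_le_mul_lintegral_encard_fiber (p := fun x : Plane => x 0)
    (by fun_prop) (fun n => (hF n).mk2_graph) (fun n t => rfl) hAm hAF).trans
    (mul_le_mul_of_nonneg_right hK zero_le)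

/-- Coarea inequality for countable unions of α-Lipschitz graphs over the x-axis. -/
theorem stmt3 (α : ℝ) (hα : 0 < α) (f : ℕ → ℝ → ℝ) (s : ℕ → Set ℝ)
    (hf : ∀ n, LipschitzOnWith α.toNNReal (f n) (s n))
    (E : Set Plane) (hE : E = ⋃ n, (fun t => mk2 t (f n t)) '' s n)
    (A : Set Plane) (hA : A ⊆ E) (hAm : MeasurableSet A) :
    μH[1] A ≤ ENNReal.ofReal (Real.sqrt (1 + α ^ 2)) *
      ∫⁻ t : ℝ, ((A ∩ {x : Plane | x 0 = t}).encard : ℝ≥0∞) :=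
  stmt3_general α f s hf E hE A hA hAm
end
end

section
/- If f : [a,b] → ℝ is α-Lipschitz, then H¹({(t, f(t)) : t ∈ [a,b]}) = ∫_a^b √(1 + f'(t)²) dt ≤ √(1+α²)·(b−a). -/
/-!
Extend `f` to a Lipschitz function on `ℝ` and put `γ t = (t, f t)`; then `‖γ'‖ = √(1 + f'²)`
almost everywhere.

Upper bound: the fundamental theorem of calculus for `f` and Cauchy–Schwarz give the chord estimate
`|γ y - γ x| ≤ ∫_x^y ‖γ'‖`, so `γ` is a `1`-Lipschitz function of the arc-length parameter
`σ x = ∫_a^x ‖γ'‖` and `H¹(γ[a,b]) ≤ H¹([σ a, σ b]) = σ b - σ a`.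

Lower bound: `η t = H¹(γ[a,t])` is monotone, and since `γ` is injective and a connected set has
`H¹` at least the distance between any two of its points, `η s - η t ≥ |γ s - γ t|` for `t ≤ s`.
Hence `‖γ'‖ ≤ η'` almost everywhere and `∫_a^b ‖γ'‖ ≤ ∫_a^b η' ≤ η b`.
-/

open MeasureTheory Set Real
open scoped ENNReal NNReal

noncomputable section

open Filter Topology

theorem IsPreconnected.ofReal_dist_le_hausdorffMeasure {X : Type*} [MetricSpace X]
    [MeasurableSpace X] [BorelSpace X] {S : Set X} (hS : IsPreconnected S) {x y : X}
    (hx : x ∈ S) (hy : y ∈ S) : ENNReal.ofReal (dist x y) ≤ μH[1] S := by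
  have hlip : LipschitzWith 1 (dist x) := LipschitzWith.dist_right x
  have hIcc : Icc (dist x x) (dist x y) ⊆ dist x '' S :=
    (hS.image _ hlip.continuous.continuousOn).Icc_subset (mem_image_of_mem _ hx)
      (mem_image_of_mem _ hy)
  calc ENNReal.ofReal (dist x y) = μH[1] (Icc (dist x x) (dist x y)) := by
        rw [hausdorffMeasure_real, Real.volume_Icc, dist_self, sub_zero]
    _ ≤ μH[1] (dist x '' S) := measure_mono hIcc
    _ ≤ μH[1] S := by simpa using hlip.hausdorffMeasure_image_le zero_le_one S

theorem hausdorffMeasure_image_le_of_edist_le {α X Y : Type*} [EMetricSpace X]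
    [MeasurableSpace X] [BorelSpace X] [EMetricSpace Y] [MeasurableSpace Y] [BorelSpace Y]
    {γ : α → X} {σ : α → Y} {s : Set α}
    (h : ∀ x ∈ s, ∀ y ∈ s, edist (γ x) (γ y) ≤ edist (σ x) (σ y)) {d : ℝ} (hd : 0 ≤ d) :
    μH[d] (γ '' s) ≤ μH[d] (σ '' s) := by
  obtain rfl | ⟨x₀, -⟩ := s.eq_empty_or_nonempty
  · simp
  have : Nonempty α := ⟨x₀⟩
  -- `γ` factors through `σ` along a section of `σ` over `s`
  set ψ : Y → X := γ ∘ Function.invFunOn σ s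
  have hψ : ∀ x ∈ s, ψ (σ x) = γ x := fun x hx => by
    have hex : ∃ x' ∈ s, σ x' = σ x := ⟨x, hx, rfl⟩
    refine edist_le_zero.1 ((h _ (Function.invFunOn_mem hex) x hx).trans ?_)
    rw [Function.invFunOn_eq hex, edist_self]
  have hlip : LipschitzOnWith 1 ψ (σ '' s) := by
    rintro _ ⟨x, hx, rfl⟩ _ ⟨y, hy, rfl⟩
    rw [hψ x hx, hψ y hy, ENNReal.coe_one, one_mul]
    exact h x hx y hy
  calc μH[d] (γ '' s) = μH[d] (ψ '' (σ '' s)) := by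
        rw [image_image, image_congr fun x hx => hψ x hx]
    _ ≤ μH[d] (σ '' s) := by simpa using hlip.hausdorffMeasure_image_le hd

theorem hausdorffMeasure_image_Icc_le_ofReal_integral {X : Type*} [MetricSpace X]
    [MeasurableSpace X] [BorelSpace X] {γ : ℝ → X} {u : ℝ → ℝ} {a b : ℝ}
    (hu : IntervalIntegrable u volume a b)
    (h : ∀ x ∈ Icc a b, ∀ y ∈ Icc a b, x ≤ y → dist (γ x) (γ y) ≤ ∫ t in x..y, u t) :
    μH[1] (γ '' Icc a b) ≤ ENNReal.ofReal (∫ t in a..b, u t) := by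
  set σ : ℝ → ℝ := fun x => ∫ t in a..x, u t
  have hσ : ∀ x ∈ Icc a b, ∀ y ∈ Icc a b, x ≤ y → dist (γ x) (γ y) ≤ σ y - σ x := by
    intro x hx y hy hxy
    have hsub : ∀ z ∈ Icc a b, uIcc a z ⊆ uIcc a b := fun z hz =>
      uIcc_subset_uIcc_left (uIcc_of_le (hz.1.trans hz.2) ▸ hz)
    rw [intervalIntegral.integral_interval_sub_left (hu.mono_set (hsub y hy))
      (hu.mono_set (hsub x hx))]
    exact h x hx y hy hxy
  have hedist : ∀ x ∈ Icc a b, ∀ y ∈ Icc a b, edist (γ x) (γ y) ≤ edist (σ x) (σ y) := by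
    intro x hx y hy
    rw [edist_dist, edist_dist, Real.dist_eq]
    refine ENNReal.ofReal_le_ofReal ?_
    rcases le_total x y with hxy | hyx
    · exact (hσ x hx y hy hxy).trans (neg_sub (σ x) (σ y) ▸ neg_le_abs _)
    · exact dist_comm (γ x) _ ▸ (hσ y hy x hx hyx).trans (le_abs_self _)
  have hrange : σ '' Icc a b ⊆ Icc (σ a) (σ b) := by
    rintro _ ⟨x, hx, rfl⟩
    have ha : a ∈ Icc a b := ⟨le_rfl, hx.1.trans hx.2⟩
    have hb : b ∈ Icc a b := ⟨hx.1.trans hx.2, le_rfl⟩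
    exact ⟨sub_nonneg.1 (dist_nonneg.trans (hσ a ha x hx hx.1)),
      sub_nonneg.1 (dist_nonneg.trans (hσ x hx b hb hx.2))⟩
  calc μH[1] (γ '' Icc a b) ≤ μH[1] (σ '' Icc a b) :=
        hausdorffMeasure_image_le_of_edist_le hedist zero_le_one
    _ ≤ μH[1] (Icc (σ a) (σ b)) := measure_mono hrange
    _ = ENNReal.ofReal (∫ t in a..b, u t) := by
        rw [hausdorffMeasure_real, Real.volume_Icc]
        simp [σ]

theorem add_ofReal_dist_le_hausdorffMeasure_image_Icc {X : Type*} [MetricSpace X]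
    [MeasurableSpace X] [BorelSpace X] {γ : ℝ → X} {a b c : ℝ} (hγ : ContinuousOn γ (Icc b c))
    (hinj : InjOn γ (Icc a c)) (hab : a ≤ b) (hbc : b ≤ c) :
    μH[1] (γ '' Icc a b) + ENNReal.ofReal (dist (γ b) (γ c)) ≤ μH[1] (γ '' Icc a c) := by
  have := Measure.nullSingletonClass_hausdorff X one_pos
  have hmeas : MeasurableSet (γ '' Icc b c) :=
    (isCompact_Icc.image_of_continuousOn hγ).isClosed.measurableSet
  have hinter : γ '' Icc a b ∩ γ '' Icc b c = {γ b} := by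
    rw [← hinj.image_inter (Icc_subset_Icc_right hbc) (Icc_subset_Icc_left hab),
      Icc_inter_Icc_eq_singleton hab hbc, image_singleton]
  have hdist : ENNReal.ofReal (dist (γ b) (γ c)) ≤ μH[1] (γ '' Icc b c) :=
    (isPreconnected_Icc.image γ hγ).ofReal_dist_le_hausdorffMeasure
      (mem_image_of_mem γ ⟨le_rfl, hbc⟩) (mem_image_of_mem γ ⟨hbc, le_rfl⟩)
  calc μH[1] (γ '' Icc a b) + ENNReal.ofReal (dist (γ b) (γ c))
      ≤ μH[1] (γ '' Icc a b) + μH[1] (γ '' Icc b c) := by gcongr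
    _ = μH[1] (γ '' Icc a b ∪ γ '' Icc b c) := by
        rw [← measure_union_add_inter _ hmeas, hinter, measure_singleton, add_zero]
    _ = μH[1] (γ '' Icc a c) := by rw [← image_union, Icc_union_Icc_eq_Icc hab hbc]

theorem MonotoneOn.intervalIntegral_le_sub_of_le_deriv {η u : ℝ → ℝ} {a b : ℝ}
    (hη : MonotoneOn η (Icc a b)) (hab : a ≤ b) (hu : IntervalIntegrable u volume a b)
    (h : ∀ᵐ t, t ∈ Ioo a b → u t ≤ deriv η t) : ∫ t in a..b, u t ≤ η b - η a := by
  rw [← uIcc_of_le hab] at hη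
  have hle : u ≤ᵐ[volume.restrict (Icc a b)] deriv η := by
    rw [← restrict_Ioo_eq_restrict_Icc]
    exact (ae_restrict_iff' measurableSet_Ioo).2 h
  calc ∫ t in a..b, u t ≤ ∫ t in a..b, deriv η t :=
        intervalIntegral.integral_mono_ae_restrict hab hu hη.intervalIntegrable_deriv hle
    _ ≤ η b - η a := by
        have hmono : η a ≤ η b := hη left_mem_uIcc right_mem_uIcc hab
        exact (uIcc_of_le (sub_nonneg.2 hmono) ▸ hη.intervalIntegral_deriv_mem_uIcc).2

theorem norm_le_of_hasDerivAt_of_dist_le {E : Type*} [NormedAddCommGroup E] [NormedSpace ℝ E]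
    {γ : ℝ → E} {η : ℝ → ℝ} {v : E} {c t : ℝ} (hγ : HasDerivAt γ v t) (hη : HasDerivAt η c t)
    (h : ∀ᶠ δ in 𝓝[>] 0, dist (γ t) (γ (t + δ)) ≤ η (t + δ) - η t) : ‖v‖ ≤ c := by
  refine le_of_tendsto_of_tendsto hγ.tendsto_slope_zero_right.norm hη.tendsto_slope_zero_right ?_
  filter_upwards [h, self_mem_nhdsWithin] with δ hδ (hpos : 0 < δ)
  rw [norm_smul, Real.norm_of_nonneg (inv_nonneg.2 hpos.le), ← dist_eq_norm, dist_comm,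
    smul_eq_mul]
  exact mul_le_mul_of_nonneg_left hδ (inv_nonneg.2 hpos.le)

theorem ofReal_integral_norm_le_hausdorffMeasure_image_Icc {E : Type*} [NormedAddCommGroup E]
    [NormedSpace ℝ E] [MeasurableSpace E] [BorelSpace E] {γ v : ℝ → E} {a b : ℝ} (hab : a ≤ b)
    (hγ : ContinuousOn γ (Icc a b)) (hinj : InjOn γ (Icc a b))
    (hfin : μH[1] (γ '' Icc a b) ≠ ∞) (hv : ∀ᵐ t, t ∈ Ioo a b → HasDerivAt γ (v t) t)
    (hvi : IntervalIntegrable (fun t => ‖v t‖) volume a b) :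
    ENNReal.ofReal (∫ t in a..b, ‖v t‖) ≤ μH[1] (γ '' Icc a b) := by
  have hfinIcc : ∀ t ≤ b, μH[1] (γ '' Icc a t) ≠ ∞ := fun t ht =>
    ne_top_of_le_ne_top hfin (measure_mono (image_mono (Icc_subset_Icc_right ht)))
  set η : ℝ → ℝ := fun t => (μH[1] (γ '' Icc a (min t b))).toReal
  have hη : Monotone η := fun s t hst =>
    ENNReal.toReal_mono (hfinIcc _ (min_le_right t b)) (measure_mono (image_mono (by gcongr)))
  have hηIcc : ∀ t ∈ Icc a b, η t = (μH[1] (γ '' Icc a t)).toReal := fun t ht => by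
    simp only [η, min_eq_left ht.2]
  have hincr : ∀ t ∈ Icc a b, ∀ s ∈ Icc t b, dist (γ t) (γ s) ≤ η s - η t := by
    intro t ht s hs
    have h := ENNReal.toReal_mono (hfinIcc s hs.2) (add_ofReal_dist_le_hausdorffMeasure_image_Icc
      (hγ.mono (Icc_subset_Icc ht.1 hs.2)) (hinj.mono (Icc_subset_Icc_right hs.2)) ht.1 hs.1)
    rw [ENNReal.toReal_add (hfinIcc t (hs.1.trans hs.2)) ENNReal.ofReal_ne_top,
      ENNReal.toReal_ofReal dist_nonneg] at h
    rw [hηIcc t ⟨ht.1, hs.1.trans hs.2⟩, hηIcc s ⟨ht.1.trans hs.1, hs.2⟩]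
    linarith
  have hderiv : ∀ᵐ t, t ∈ Ioo a b → ‖v t‖ ≤ deriv η t := by
    filter_upwards [hv, hη.ae_differentiableAt] with t hvt hηt ht
    refine norm_le_of_hasDerivAt_of_dist_le (hvt ht) hηt.hasDerivAt ?_
    filter_upwards [Ioo_mem_nhdsGT (sub_pos.2 ht.2)] with δ hδ
    exact hincr t (Ioo_subset_Icc_self ht) (t + δ) ⟨by linarith [hδ.1], by linarith [hδ.2]⟩
  have hint := (hη.monotoneOn (Icc a b)).intervalIntegral_le_sub_of_le_deriv hab hvi hderiv
  have hηb : η b = (μH[1] (γ '' Icc a b)).toReal := hηIcc b ⟨hab, le_rfl⟩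
  calc ENNReal.ofReal (∫ t in a..b, ‖v t‖) ≤ ENNReal.ofReal (η b) :=
        ENNReal.ofReal_le_ofReal (hint.trans (sub_le_self _ ENNReal.toReal_nonneg))
    _ = μH[1] (γ '' Icc a b) := by rw [hηb, ENNReal.ofReal_toReal hfin]

theorem norm_mk2 (p q : ℝ) : ‖mk2 p q‖ = √(p ^ 2 + q ^ 2) := by
  simp [EuclideanSpace.norm_eq, mk2, Fin.sum_univ_two]

theorem dist_mk2_s4 (p q p' q' : ℝ) :
    dist (mk2 p q) (mk2 p' q') = √((p - p') ^ 2 + (q - q') ^ 2) := by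
  simp [EuclideanSpace.dist_eq, mk2, Fin.sum_univ_two, Real.dist_eq]

def graphCurve (g : ℝ → ℝ) (t : ℝ) : Plane := mk2 t (g t)

theorem graphCurve_injective (g : ℝ → ℝ) : Function.Injective (graphCurve g) := fun s t h => by
  simpa [graphCurve, mk2] using congrArg (fun p : Plane => p 0) h

theorem Continuous.graphCurve {g : ℝ → ℝ} (hg : Continuous g) : Continuous (graphCurve g) :=
  (PiLp.continuous_toLp 2 _).comp (continuous_pi fun i => by fin_cases i <;> simp <;> fun_prop)

theorem HasDerivAt.graphCurve {g : ℝ → ℝ} {r t : ℝ} (hg : HasDerivAt g r t) :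
    HasDerivAt (graphCurve g) (mk2 1 r) t := by
  have hpi : HasDerivAt (fun t => ![t, g t]) ![1, r] t := by
    refine hasDerivAt_pi.2 fun i => ?_
    fin_cases i
    · simpa using hasDerivAt_id' t
    · simpa using hg
  exact (EuclideanSpace.equiv (Fin 2) ℝ).symm.hasFDerivAt.comp_hasDerivAt t hpi

namespace LipschitzWith

variable {K : ℝ≥0} {g : ℝ → ℝ}

theorem sqrt_one_add_deriv_sq_le (hg : LipschitzWith K g) (x : ℝ) :
    √(1 + deriv g x ^ 2) ≤ √(1 + (K : ℝ) ^ 2) := by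
  have hK : |deriv g x| ≤ K := norm_deriv_le_of_lipschitz hg
  exact sqrt_le_sqrt (add_le_add_right (sq_le_sq' (abs_le.1 hK).1 (abs_le.1 hK).2) 1)

theorem intervalIntegrable_sqrt_one_add_deriv_sq (hg : LipschitzWith K g) (a b : ℝ) :
    IntervalIntegrable (fun x => √(1 + deriv g x ^ 2)) volume a b := by
  refine (intervalIntegrable_const (c := √(1 + (K : ℝ) ^ 2))).mono_fun' (by fun_prop)
    (ae_of_all _ fun x => ?_)
  dsimp only
  rw [Real.norm_of_nonneg (sqrt_nonneg _)]
  exact hg.sqrt_one_add_deriv_sq_le x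

theorem dist_graphCurve_le_integral (hg : LipschitzWith K g) {s t : ℝ} (hst : s ≤ t) :
    dist (graphCurve g s) (graphCurve g t) ≤ ∫ x in s..t, √(1 + deriv g x ^ 2) := by
  set d := dist (graphCurve g s) (graphCurve g t) with hd_def
  set I := ∫ x in s..t, √(1 + deriv g x ^ 2)
  have hd : d = √((t - s) ^ 2 + (g t - g s) ^ 2) := by
    rw [hd_def, dist_comm]; exact dist_mk2_s4 _ _ _ _
  have hac := (hg.lipschitzOnWith (s := uIcc s t)).absolutelyContinuousOnInterval
  have hderiv := hac.intervalIntegrable_deriv.const_mul (g t - g s)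
  -- Cauchy–Schwarz for the chord `(t - s, g t - g s)` against the tangent `(1, g' x)`
  have hcs : ∀ x, (t - s) + (g t - g s) * deriv g x ≤ d * √(1 + deriv g x ^ 2) := fun x => by
    rw [hd, ← sqrt_mul (by positivity)]
    exact le_sqrt_of_sq_le (by nlinarith [sq_nonneg ((t - s) * deriv g x - (g t - g s))])
  have hsq : d ^ 2 ≤ d * I := calc
    d ^ 2 = ∫ x in s..t, ((t - s) + (g t - g s) * deriv g x) := by
        rw [intervalIntegral.integral_add intervalIntegrable_const hderiv,
          intervalIntegral.integral_const_mul,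
          hac.integral_deriv_eq_sub, intervalIntegral.integral_const, smul_eq_mul, hd,
          sq_sqrt (by positivity)]
        ring
    _ ≤ ∫ x in s..t, d * √(1 + deriv g x ^ 2) :=
        intervalIntegral.integral_mono_on hst (intervalIntegrable_const.add hderiv)
          ((hg.intervalIntegrable_sqrt_one_add_deriv_sq s t).const_mul d) fun x _ => hcs x
    _ = d * I := intervalIntegral.integral_const_mul _ _
  have hI : 0 ≤ I := intervalIntegral.integral_nonneg hst fun x _ => sqrt_nonneg _
  nlinarith [dist_nonneg (x := graphCurve g s) (y := graphCurve g t)]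

theorem hausdorffMeasure_graphCurve_image_Icc (hg : LipschitzWith K g) {a b : ℝ} (hab : a ≤ b) :
    μH[1] (graphCurve g '' Icc a b) = ENNReal.ofReal (∫ x in a..b, √(1 + deriv g x ^ 2)) := by
  have hint := hg.intervalIntegrable_sqrt_one_add_deriv_sq a b
  have hle := hausdorffMeasure_image_Icc_le_ofReal_integral hint
    fun x _ y _ hxy => hg.dist_graphCurve_le_integral hxy
  have hnorm : ∀ x, ‖mk2 1 (deriv g x)‖ = √(1 + deriv g x ^ 2) := by simp [norm_mk2]
  refine le_antisymm hle ?_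
  simp_rw [← hnorm]
  refine ofReal_integral_norm_le_hausdorffMeasure_image_Icc hab
    hg.continuous.graphCurve.continuousOn (graphCurve_injective g).injOn (ne_top_of_le_ne_top ENNReal.ofReal_ne_top hle) ?_
    (by simpa only [hnorm] using hint)
  filter_upwards [hg.ae_differentiableAt_real] with t ht _
  exact ht.hasDerivAt.graphCurve

end LipschitzWith

theorem intervalIntegral_comp_deriv_eq_of_eqOn {f g : ℝ → ℝ} {a b : ℝ} (hab : a ≤ b)
    (hfg : EqOn f g (Icc a b)) (F : ℝ → ℝ) :
    ∫ t in a..b, F (deriv f t) = ∫ t in a..b, F (deriv g t) := by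
  have hderiv := (hfg.mono Ioo_subset_Icc_self).deriv isOpen_Ioo
  simp only [intervalIntegral.integral_of_le hab, integral_Ioc_eq_integral_Ioo]
  exact setIntegral_congr_fun measurableSet_Ioo fun t ht => by rw [hderiv ht]

/-- Length of the graph of a Lipschitz function. -/
theorem stmt4 (α : ℝ) (hα : 0 < α) (a b : ℝ) (hab : a ≤ b) (f : ℝ → ℝ)
    (hf : LipschitzOnWith α.toNNReal f (Set.Icc a b)) :
    μH[1] ((fun t => mk2 t (f t)) '' Set.Icc a b)
      = ENNReal.ofReal (∫ t in a..b, Real.sqrt (1 + (deriv f t) ^ 2)) ∧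
    (∫ t in a..b, Real.sqrt (1 + (deriv f t) ^ 2)) ≤ Real.sqrt (1 + α ^ 2) * (b - a) := by
  obtain ⟨g, hg, hfg⟩ := hf.extend_real
  have himage : (fun t => mk2 t (f t)) '' Icc a b = graphCurve g '' Icc a b :=
    image_congr fun t ht => by rw [graphCurve, hfg ht]
  have hα' : (α.toNNReal : ℝ) = α := Real.coe_toNNReal α hα.le
  rw [himage, intervalIntegral_comp_deriv_eq_of_eqOn hab hfg fun r => √(1 + r ^ 2)]
  refine ⟨hg.hausdorffMeasure_graphCurve_image_Icc hab, ?_⟩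
  calc ∫ t in a..b, √(1 + deriv g t ^ 2) ≤ ∫ _ in a..b, √(1 + α ^ 2) :=
        intervalIntegral.integral_mono_on hab (hg.intervalIntegrable_sqrt_one_add_deriv_sq a b)
          intervalIntegrable_const fun t _ => hα' ▸ hg.sqrt_one_add_deriv_sq_le t
    _ = √(1 + α ^ 2) * (b - a) := by
        rw [intervalIntegral.integral_const, smul_eq_mul, mul_comm]
end
end

section
/- Let E ⊂ B(0,1) ⊂ ℝ², ε ∈ (0,1), β ∈ (0,1/2). Let G = {x ∈ E : Θ*_{E,β}(x) ≤ ε}, where Θ*_{E,β}(x) = sup_{r>0} H¹(C_β(x,r) ∩ E)/r. Then there exists a 2β-Lipschitz graph Γ over the x-axis such that H¹(G ∖ Γ) ≲ ε/β (with an absolute implicit constant). -/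
open MeasureTheory Set Real
open scoped ENNReal NNReal

noncomputable section

/-- The (translated) double cone around the vertical axis: `C_β(x)`. -/
def cone (β : ℝ) (x : Plane) : Set Plane := {y | β * |y 0 - x 0| ≤ |y 1 - x 1|}


/-- Maximal conical density Θ*_{E,β}(x). -/
def conicalDensity (E : Set Plane) (β : ℝ) (x : Plane) : ℝ≥0∞ :=
  ⨆ (r : ℝ) (_ : 0 < r), μH[1] (cone β x ∩ Metric.closedBall x r ∩ E) / ENNReal.ofReal r

/-!
Let `v` be a dense sequence in the set `G` of points of low conical density and let `f` be the
upper envelope of the downward tents `t ↦ v n 1 - 2β |v n 0 - t|`, whose apexes are the points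
`v n`. Then `f` is `2β`-Lipschitz and `G` lies on or below its graph, so it suffices to bound,
uniformly in `n`, the measure of the points of `G` strictly below the envelope of the first `n + 1`
tents.

Such a point `z`, at height `δ` below the envelope and at horizontal distance `d` from the apex `q`
of the tent realising the envelope above it, lies in the cone at `q`. If `δ ≲ β d`, it lies within
distance `≲ d` of `q`, and `d` is at most the length of the interval on which this tent realises
the envelope; these intervals are disjoint, so these points cost `≲ ε`. The points with `δ ≫ β d`
are covered, by Vitali's lemma, by vertical strips around points `b` of width `≍ δ(b) / β` with
disjoint cores: on such a strip the points with small `δ` lie in the cone at `b`, the others in the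
cone at the apex above `b`, both of radius `≍ δ(b) / β`. Disjointness bounds `∑ δ(b)` by a constant,
so these points cost `≲ ε / β`.
-/

namespace TwoCones

variable {β : ℝ}

lemma abs_sub_apply_le_dist (x y : Plane) (i : Fin 2) : |x i - y i| ≤ dist x y :=
  PiLp.dist_apply_le x y i

lemma dist_le_abs_sub_add_abs_sub (x y : Plane) : dist x y ≤ |x 0 - y 0| + |x 1 - y 1| := by
  rw [EuclideanSpace.dist_eq, Fin.sum_univ_two, Real.dist_eq, Real.dist_eq]
  refine Real.sqrt_le_iff.2 ⟨by positivity, ?_⟩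
  nlinarith [abs_nonneg (x 0 - y 0), abs_nonneg (x 1 - y 1), sq_abs (x 0 - y 0), sq_abs (x 1 - y 1)]

lemma abs_apply_le_one {x : Plane} (hx : x ∈ Metric.closedBall 0 1) (i : Fin 2) : |x i| ≤ 1 := by
  simpa using (abs_sub_apply_le_dist x 0 i).trans hx

lemma measure_le_of_subset_cone {E S : Set Plane} {ε r : ℝ} {x : Plane} (hε : 0 ≤ ε)
    (hx : conicalDensity E β x ≤ ENNReal.ofReal ε) (hr : 0 ≤ r)
    (hS : S ⊆ cone β x ∩ Metric.closedBall x r ∩ E) :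
    μH[1] S ≤ ENNReal.ofReal (ε * r) := by
  rcases hr.eq_or_lt with rfl | hr
  · have := Measure.nullSingletonClass_hausdorff Plane one_pos
    calc μH[1] S ≤ μH[1] {x} := measure_mono fun z hz => by simpa using (hS hz).1.2
      _ = 0 := measure_singleton x
      _ ≤ _ := zero_le
  have hr0 : ENNReal.ofReal r ≠ 0 := by simpa using hr
  have hdens : μH[1] (cone β x ∩ Metric.closedBall x r ∩ E) / ENNReal.ofReal r ≤
      ENNReal.ofReal ε :=
    (le_iSup₂_of_le r hr le_rfl).trans hx
  rw [ENNReal.div_le_iff hr0 ENNReal.ofReal_ne_top, ← ENNReal.ofReal_mul hε] at hdens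
  exact (measure_mono hS).trans hdens

def tent (β : ℝ) (p : Plane) (t : ℝ) : ℝ := p 1 - 2 * β * |p 0 - t|

@[simp]
lemma tent_apply_self (β : ℝ) (p : Plane) : tent β p (p 0) = p 1 := by
  simp [tent]

lemma tent_le (hβ : 0 ≤ β) (p : Plane) (t : ℝ) : tent β p t ≤ p 1 := by
  unfold tent; nlinarith [abs_nonneg (p 0 - t)]

lemma tent_le_tent_add (hβ : 0 ≤ β) (p : Plane) (s t : ℝ) :
    tent β p s ≤ tent β p t + 2 * β * |s - t| := by
  have h := mul_le_mul_of_nonneg_left (abs_sub_le (p 0) s t) (by positivity : 0 ≤ 2 * β)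
  unfold tent
  linarith

lemma continuous_tent_apply (β t : ℝ) : Continuous fun p : Plane => tent β p t := by
  unfold tent; fun_prop

lemma tent_sub_tent_le (hβ : 0 ≤ β) (p q : Plane) (t : ℝ) :
    tent β p t - tent β q t ≤ p 1 - tent β q (p 0) := by
  have := tent_le_tent_add hβ q (p 0) t
  unfold tent at *
  linarith

lemma monotone_abs_sub_sub_abs_sub {a b : ℝ} (hab : a ≤ b) :
    Monotone fun t => |a - t| - |b - t| := by
  intro s t hst
  dsimp only
  rcases abs_cases (a - s) with ⟨h₁, _⟩ | ⟨h₁, _⟩ <;>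
    rcases abs_cases (b - s) with ⟨h₂, _⟩ | ⟨h₂, _⟩ <;>
    rcases abs_cases (a - t) with ⟨h₃, _⟩ | ⟨h₃, _⟩ <;>
    rcases abs_cases (b - t) with ⟨h₄, _⟩ | ⟨h₄, _⟩ <;>
    linarith

/-- The difference of two tents is monotone or antitone. -/
lemma min_le_tent_sub_tent (hβ : 0 ≤ β) (p q : Plane) {t₁ t₂ t₃ : ℝ} (h₁₂ : t₁ ≤ t₂)
    (h₂₃ : t₂ ≤ t₃) :
    min (tent β p t₁ - tent β q t₁) (tent β p t₃ - tent β q t₃) ≤ tent β p t₂ - tent β q t₂ := by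
  have h2β : 0 ≤ 2 * β := by positivity
  unfold tent
  rcases le_total (p 0) (q 0) with h | h
  · have := mul_le_mul_of_nonneg_left (monotone_abs_sub_sub_abs_sub h h₂₃) h2β
    exact min_le_of_right_le (by linarith)
  · have := mul_le_mul_of_nonneg_left (monotone_abs_sub_sub_abs_sub h h₁₂) h2β
    exact min_le_of_left_le (by linarith)

lemma mul_abs_sub_le_of_ball_inter_nonempty (hβ : 0 < β) {a b r s : ℝ}
    (h : (Metric.ball a (r / (36 * β)) ∩ Metric.ball b (s / (36 * β))).Nonempty)
    (hrs : r ≤ 2 * s) : 12 * β * |a - b| ≤ s := by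
  obtain ⟨w, hwa, hwb⟩ := h
  rw [Metric.mem_ball, Real.dist_eq] at hwa hwb
  have hsum : |a - b| * (36 * β) ≤ r + s := by
    rw [← le_div_iff₀ (by positivity), add_div]
    linarith [abs_sub_le a w b, abs_sub_comm a w]
  linarith

section Envelope

variable {ι κ : Type*} [Fintype ι] [Nonempty ι] [Fintype κ] [Nonempty κ]

def envelope (β : ℝ) (y : ι → Plane) (t : ℝ) : ℝ :=
  Finset.univ.sup' Finset.univ_nonempty fun j => tent β (y j) t

variable {y : ι → Plane}

lemma tent_le_envelope (j : ι) (t : ℝ) : tent β (y j) t ≤ envelope β y t :=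
  Finset.le_sup' (fun j => tent β (y j) t) (Finset.mem_univ j)

lemma envelope_le {t c : ℝ} (h : ∀ j, tent β (y j) t ≤ c) : envelope β y t ≤ c :=
  Finset.sup'_le _ _ fun j _ => h j

lemma envelope_comp_le (f : κ → ι) (t : ℝ) : envelope β (y ∘ f) t ≤ envelope β y t :=
  envelope_le fun k => tent_le_envelope (f k) t

lemma envelope_le_envelope_add (hβ : 0 ≤ β) (s t : ℝ) :
    envelope β y s ≤ envelope β y t + 2 * β * |s - t| :=
  envelope_le fun j => (tent_le_tent_add hβ (y j) s t).trans (by gcongr; exact tent_le_envelope j t)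

lemma envelope_le_one (hβ : 0 ≤ β) (hy : ∀ j, y j ∈ Metric.closedBall 0 1) (t : ℝ) :
    envelope β y t ≤ 1 :=
  envelope_le fun j => (tent_le hβ (y j) t).trans (abs_le.1 (abs_apply_le_one (hy j) 1)).2

lemma filter_envelope_le_tent_nonempty (β : ℝ) (y : ι → Plane) (t : ℝ) :
    (Finset.univ.filter fun j => envelope β y t ≤ tent β (y j) t).Nonempty := by
  obtain ⟨j, -, hj⟩ := Finset.exists_mem_eq_sup' Finset.univ_nonempty fun j => tent β (y j) t
  exact ⟨j, Finset.mem_filter.2 ⟨Finset.mem_univ j, hj.le⟩⟩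

def gap (β : ℝ) (y : ι → Plane) (z : Plane) : ℝ := envelope β y (z 0) - z 1

lemma gap_le_two (hβ : 0 ≤ β) (hy : ∀ j, y j ∈ Metric.closedBall 0 1) {z : Plane}
    (hz : z ∈ Metric.closedBall 0 1) : gap β y z ≤ 2 := by
  have := (abs_le.1 (abs_apply_le_one hz 1)).1
  have := envelope_le_one hβ hy (z 0)
  unfold gap
  linarith

lemma mem_cone_of_gap_le_quarter (hβ₀ : 0 < β) (hβ : β ≤ 1 / 2) {b z : Plane}
    (hz : 0 ≤ gap β y z) (hzb : gap β y z ≤ gap β y b / 4)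
    (hx : 12 * β * |z 0 - b 0| ≤ gap β y b) :
    z ∈ cone β b ∩ Metric.closedBall b (2 * gap β y b / β) := by
  have hF := envelope_le_envelope_add (y := y) hβ₀.le (b 0) (z 0)
  rw [abs_sub_comm] at hF
  have hb : gap β y b = envelope β y (b 0) - b 1 := rfl
  have hz' : gap β y z = envelope β y (z 0) - z 1 := rfl
  have hrise : 7 / 12 * gap β y b ≤ z 1 - b 1 := by linarith
  have hrise' : z 1 - b 1 ≤ 7 / 6 * gap β y b := by
    linarith [envelope_le_envelope_add (y := y) hβ₀.le (z 0) (b 0)]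
  have hvert : |z 1 - b 1| = z 1 - b 1 := abs_of_nonneg (by linarith)
  refine ⟨show β * |z 0 - b 0| ≤ |z 1 - b 1| by rw [hvert]; linarith, ?_⟩
  rw [Metric.mem_closedBall, le_div_iff₀ hβ₀]
  have hdist := mul_le_mul_of_nonneg_right (dist_le_abs_sub_add_abs_sub z b) hβ₀.le
  rw [hvert] at hdist
  nlinarith [mul_le_mul_of_nonneg_left hrise' hβ₀.le, mul_le_mul_of_nonneg_right hβ
    (show 0 ≤ gap β y b by linarith)]

variable [LinearOrder ι]

/-- Breaking ties by the least index makes the level sets of `topIndex` intervals. -/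
def topIndex (β : ℝ) (y : ι → Plane) (t : ℝ) : ι :=
  (Finset.univ.filter fun j => envelope β y t ≤ tent β (y j) t).min'
    (filter_envelope_le_tent_nonempty β y t)

lemma tent_topIndex (t : ℝ) : tent β (y (topIndex β y t)) t = envelope β y t :=
  le_antisymm (tent_le_envelope _ t)
    (Finset.mem_filter.1 (Finset.min'_mem _ (filter_envelope_le_tent_nonempty β y t))).2

lemma topIndex_le {t : ℝ} {k : ι} (h : envelope β y t ≤ tent β (y k) t) : topIndex β y t ≤ k :=
  Finset.min'_le _ _ (Finset.mem_filter.2 ⟨Finset.mem_univ k, h⟩)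

lemma topIndex_apex (hβ : 0 ≤ β) {t : ℝ} {j : ι} (h : topIndex β y t = j) :
    topIndex β y (y j 0) = j := by
  set k := topIndex β y (y j 0)
  have hj_top : tent β (y j) t = envelope β y t := h ▸ tent_topIndex t
  have hk_top : tent β (y k) (y j 0) = envelope β y (y j 0) := tent_topIndex _
  have hdiff := tent_sub_tent_le hβ (y j) (y k) t
  have hk_le := tent_le_envelope (β := β) (y := y) k t
  have hapex : y j 1 = tent β (y k) (y j 0) := by
    refine le_antisymm ?_ (not_lt.1 fun hlt => ?_)
    · simpa [hk_top] using tent_le_envelope (β := β) (y := y) j (y j 0)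
    · linarith
  refine le_antisymm (topIndex_le (by rw [← hk_top, ← hapex, tent_apply_self])) ?_
  exact h ▸ topIndex_le (by linarith)

lemma topIndex_eq_of_mem_Icc (hβ : 0 ≤ β) {t₁ t₂ t₃ : ℝ} {j : ι} (h₁ : topIndex β y t₁ = j)
    (h₃ : topIndex β y t₃ = j) (ht : t₂ ∈ Set.Icc t₁ t₃) : topIndex β y t₂ = j := by
  have hj₁ : tent β (y j) t₁ = envelope β y t₁ := h₁ ▸ tent_topIndex t₁
  have hj₃ : tent β (y j) t₃ = envelope β y t₃ := h₃ ▸ tent_topIndex t₃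
  have hmin (k : ι) := min_le_tent_sub_tent hβ (y j) (y k) ht.1 ht.2
  have hj₂ : tent β (y j) t₂ = envelope β y t₂ := by
    refine le_antisymm (tent_le_envelope j t₂) (envelope_le fun k => ?_)
    have h := hmin k
    rw [hj₁, hj₃] at h
    have := le_min (sub_nonneg.2 (tent_le_envelope (β := β) (y := y) k t₁))
      (sub_nonneg.2 (tent_le_envelope (β := β) (y := y) k t₃))
    linarith
  refine le_antisymm (topIndex_le hj₂.ge) ?_
  have hk : tent β (y (topIndex β y t₂)) t₂ = envelope β y t₂ := tent_topIndex t₂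
  rcases min_le_iff.1 ((hmin _).trans_eq (by rw [hk, hj₂, sub_self])) with h | h
  · rw [← h₁]; exact topIndex_le (by linarith)
  · rw [← h₃]; exact topIndex_le (by linarith)

lemma ordConnected_topIndex_preimage (hβ : 0 ≤ β) (j : ι) :
    (topIndex β y ⁻¹' {j}).OrdConnected :=
  ⟨fun _ h₁ _ h₃ _ ht => topIndex_eq_of_mem_Icc hβ h₁ h₃ ht⟩

def apexDist (β : ℝ) (y : ι → Plane) (z : Plane) : ℝ := |z 0 - y (topIndex β y (z 0)) 0|

lemma apex_sub_eq (z : Plane) :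
    y (topIndex β y (z 0)) 1 - z 1 = gap β y z + 2 * β * apexDist β y z := by
  have := tent_topIndex (β := β) (y := y) (z 0)
  unfold tent at this
  rw [gap, apexDist, abs_sub_comm, ← this]
  ring

variable {ε : ℝ} {E G : Set Plane}

lemma mem_cone_apex_of_gap_le (hβ₀ : 0 ≤ β) (hβ : β ≤ 1 / 2) {z : Plane} (hz : 0 < gap β y z)
    (hnear : gap β y z ≤ 12 * β * apexDist β y z) :
    z ∈ cone β (y (topIndex β y (z 0))) ∩
      Metric.closedBall (y (topIndex β y (z 0))) (8 * apexDist β y z) := by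
  have hapex := apex_sub_eq (β := β) (y := y) z
  have hd : 0 ≤ apexDist β y z := abs_nonneg _
  have hvert : |z 1 - y (topIndex β y (z 0)) 1| = gap β y z + 2 * β * apexDist β y z := by
    rw [abs_sub_comm, hapex, abs_of_nonneg (by positivity)]
  refine ⟨?_, ?_⟩
  · change β * |z 0 - _| ≤ _
    rw [hvert, ← apexDist]
    nlinarith
  · rw [Metric.mem_closedBall]
    refine (dist_le_abs_sub_add_abs_sub _ _).trans ?_
    rw [hvert, ← apexDist]
    nlinarith

lemma apexDist_le_volume (hβ : 0 ≤ β) {z : Plane} {j : ι} (hj : topIndex β y (z 0) = j)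
    (hz : z ∈ Metric.closedBall 0 1) (hy : y j ∈ Metric.closedBall 0 1) :
    ENNReal.ofReal (apexDist β y z) ≤ volume (topIndex β y ⁻¹' {j} ∩ Set.Icc (-1) 1) := by
  have hIcc {x : Plane} (hx : x ∈ Metric.closedBall 0 1) : x 0 ∈ Set.Icc (-1 : ℝ) 1 :=
    abs_le.1 (abs_apply_le_one hx 0)
  have hlevel : (topIndex β y ⁻¹' {j} ∩ Set.Icc (-1) 1).OrdConnected :=
    (ordConnected_topIndex_preimage hβ j).inter Set.ordConnected_Icc
  rw [apexDist, hj, abs_sub_comm, ← Real.volume_interval]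
  exact measure_mono (hlevel.uIcc_subset ⟨hj, hIcc hz⟩ ⟨topIndex_apex hβ hj, hIcc hy⟩)

lemma measure_near_le (hε : 0 ≤ ε) (hβ₀ : 0 ≤ β) (hβ : β ≤ 1 / 2) (hGE : G ⊆ E)
    (hG₁ : G ⊆ Metric.closedBall 0 1) (hGε : ∀ x ∈ G, conicalDensity E β x ≤ ENNReal.ofReal ε)
    (hy : ∀ j, y j ∈ G) :
    μH[1] {z ∈ G | 0 < gap β y z ∧ gap β y z ≤ 12 * β * apexDist β y z} ≤
      ENNReal.ofReal (16 * ε) := by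
  set L : ι → Set ℝ := fun j => topIndex β y ⁻¹' {j} ∩ Set.Icc (-1) 1
  have hL_top (j : ι) : volume (L j) ≠ ⊤ :=
    ne_top_of_le_ne_top (by simp) (measure_mono (μ := volume) Set.inter_subset_right)
  have hcover : {z ∈ G | 0 < gap β y z ∧ gap β y z ≤ 12 * β * apexDist β y z} ⊆
      ⋃ j, cone β (y j) ∩ Metric.closedBall (y j) (8 * (volume (L j)).toReal) ∩ E := by
    rintro z ⟨hzG, hz, hnear⟩
    obtain ⟨hcone, hball⟩ := mem_cone_apex_of_gap_le hβ₀ hβ hz hnear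
    have hd := apexDist_le_volume hβ₀ rfl (hG₁ hzG) (hG₁ (hy (topIndex β y (z 0))))
    refine Set.mem_iUnion.2 ⟨_, ⟨hcone, Metric.closedBall_subset_closedBall ?_ hball⟩, hGE hzG⟩
    have := (ENNReal.ofReal_le_iff_le_toReal (hL_top _)).1 hd
    linarith
  have hdisj : Pairwise (Function.onFun Disjoint L) := fun j k hjk =>
    Set.disjoint_left.2 fun t htj htk => hjk (htj.1.symm.trans htk.1)
  have hmeas (j : ι) : MeasurableSet (L j) :=
    (ordConnected_topIndex_preimage hβ₀ j).inter Set.ordConnected_Icc |>.measurableSet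
  calc μH[1] _ ≤ ∑ j, μH[1]
        (cone β (y j) ∩ Metric.closedBall (y j) (8 * (volume (L j)).toReal) ∩ E) :=
        (measure_mono hcover).trans (measure_iUnion_fintype_le _ _)
    _ ≤ ∑ j, ENNReal.ofReal (8 * ε) * volume (L j) := by
        gcongr with j
        refine (measure_le_of_subset_cone hε (hGε _ (hy j)) (by positivity) le_rfl).trans_eq ?_
        rw [← mul_assoc, mul_comm ε, ENNReal.ofReal_mul (by positivity),
          ENNReal.ofReal_toReal (hL_top j)]
    _ = ENNReal.ofReal (8 * ε) * volume (⋃ j, L j) := by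
        rw [← Finset.mul_sum, measure_iUnion hdisj hmeas, tsum_fintype]
    _ ≤ ENNReal.ofReal (8 * ε) * volume (Set.Icc (-1 : ℝ) 1) := by
        gcongr
        exact Set.iUnion_subset fun j => Set.inter_subset_right
    _ = ENNReal.ofReal (16 * ε) := by
        rw [Real.volume_Icc, ← ENNReal.ofReal_mul (by positivity)]
        congr 1
        ring

lemma mem_cone_apex_of_quarter_lt_gap (hβ₀ : 0 < β) (hβ : β ≤ 1 / 2) {b z : Plane}
    (hb : 12 * β * apexDist β y b ≤ gap β y b) (hzb : gap β y b / 4 < gap β y z)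
    (hzb' : gap β y z ≤ 2 * gap β y b) (hx : 12 * β * |z 0 - b 0| ≤ gap β y b) :
    z ∈ cone β (y (topIndex β y (b 0))) ∩
      Metric.closedBall (y (topIndex β y (b 0))) (2 * gap β y b / β) := by
  set q := y (topIndex β y (b 0))
  have hF := envelope_le_envelope_add (y := y) hβ₀.le (b 0) (z 0)
  rw [abs_sub_comm] at hF
  have hF' := envelope_le_envelope_add (y := y) hβ₀.le (z 0) (b 0)
  have hb' : gap β y b = envelope β y (b 0) - b 1 := rfl
  have hz' : gap β y z = envelope β y (z 0) - z 1 := rfl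
  have hapex := apex_sub_eq (β := β) (y := y) b
  have hd : 0 ≤ apexDist β y b := abs_nonneg _
  have hhor : |z 0 - q 0| ≤ |z 0 - b 0| + apexDist β y b := abs_sub_le _ _ _
  have hrise : 2 * β * apexDist β y b + gap β y b / 12 ≤ q 1 - z 1 := by linarith
  have hrise' : q 1 - z 1 ≤ 7 / 3 * gap β y b := by linarith
  have hvert : |z 1 - q 1| = q 1 - z 1 := by
    rw [abs_sub_comm]; exact abs_of_nonneg (by nlinarith)
  refine ⟨show β * |z 0 - q 0| ≤ |z 1 - q 1| by rw [hvert]; nlinarith, ?_⟩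
  rw [Metric.mem_closedBall, le_div_iff₀ hβ₀]
  have hdist := (dist_le_abs_sub_add_abs_sub z q).trans (add_le_add hhor hvert.le)
  nlinarith [mul_le_mul_of_nonneg_left hrise' hβ₀.le, mul_le_mul_of_nonneg_right hβ
    (show 0 ≤ gap β y b by linarith)]

lemma measure_strip_le (hε : 0 ≤ ε) (hβ₀ : 0 < β) (hβ : β ≤ 1 / 2) (hGE : G ⊆ E)
    (hGε : ∀ x ∈ G, conicalDensity E β x ≤ ENNReal.ofReal ε) (hy : ∀ j, y j ∈ G) {b : Plane}
    (hbG : b ∈ G) (hb : 12 * β * apexDist β y b ≤ gap β y b) :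
    μH[1] {z ∈ G | 0 ≤ gap β y z ∧ gap β y z ≤ 2 * gap β y b ∧
      12 * β * |z 0 - b 0| ≤ gap β y b} ≤ ENNReal.ofReal (4 * ε * gap β y b / β) := by
  set q := y (topIndex β y (b 0))
  set r := 2 * gap β y b / β
  have hgap : 0 ≤ gap β y b :=
    le_trans (by have : 0 ≤ apexDist β y b := abs_nonneg _; positivity) hb
  have hr : 0 ≤ r := by positivity
  have hcover : {z ∈ G | 0 ≤ gap β y z ∧ gap β y z ≤ 2 * gap β y b ∧
      12 * β * |z 0 - b 0| ≤ gap β y b} ⊆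
      (cone β b ∩ Metric.closedBall b r ∩ E) ∪ (cone β q ∩ Metric.closedBall q r ∩ E) := by
    rintro z ⟨hzG, hz, hzb, hx⟩
    rcases le_or_gt (gap β y z) (gap β y b / 4) with h | h
    · exact Or.inl ⟨mem_cone_of_gap_le_quarter hβ₀ hβ hz h hx, hGE hzG⟩
    · exact Or.inr ⟨mem_cone_apex_of_quarter_lt_gap hβ₀ hβ hb h hzb hx, hGE hzG⟩
  calc _ ≤ _ := (measure_mono hcover).trans (measure_union_le _ _)
    _ ≤ ENNReal.ofReal (ε * r) + ENNReal.ofReal (ε * r) :=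
        add_le_add (measure_le_of_subset_cone hε (hGε b hbG) hr le_rfl)
          (measure_le_of_subset_cone hε (hGε q (hy _)) hr le_rfl)
    _ = _ := by
        rw [← ENNReal.ofReal_add (by positivity) (by positivity)]
        congr 1
        ring

lemma measure_deep_le (hε : 0 ≤ ε) (hβ₀ : 0 < β) (hβ : β ≤ 1 / 2) (hGE : G ⊆ E)
    (hG₁ : G ⊆ Metric.closedBall 0 1) (hGε : ∀ x ∈ G, conicalDensity E β x ≤ ENNReal.ofReal ε)
    (hy : ∀ j, y j ∈ G) :
    μH[1] {z ∈ G | 12 * β * apexDist β y z < gap β y z} ≤ ENNReal.ofReal (80 * ε / β) := by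
  set D := {z ∈ G | 12 * β * apexDist β y z < gap β y z}
  have hD_pos {z : Plane} (hz : z ∈ D) : 0 < gap β y z :=
    lt_of_le_of_lt (by have : 0 ≤ apexDist β y z := abs_nonneg _; positivity) hz.2
  have hD_le_two {z : Plane} (hz : z ∈ D) : gap β y z ≤ 2 :=
    gap_le_two hβ₀.le (fun j => hG₁ (hy j)) (hG₁ hz.1)
  set I : Plane → Set ℝ := fun z => Metric.ball (z 0) (gap β y z / (36 * β))
  obtain ⟨u, huD, hdisj, hcover⟩ := Vitali.exists_disjoint_subfamily_covering_enlargement I D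
    (gap β y) 2 one_lt_two (fun z hz => (hD_pos hz).le) 2 (fun z hz => hD_le_two hz)
    (fun z hz => Metric.nonempty_ball.2 (by have := hD_pos hz; positivity))
  have hu : u.Countable := hdisj.countable_of_isOpen (fun _ _ => Metric.isOpen_ball)
    (fun z hz => Metric.nonempty_ball.2 (by have := hD_pos (huD hz); positivity))
  set strip : Plane → Set Plane := fun b => {z ∈ G | 0 ≤ gap β y z ∧
    gap β y z ≤ 2 * gap β y b ∧ 12 * β * |z 0 - b 0| ≤ gap β y b}
  have hD_strip : D ⊆ ⋃ b ∈ u, strip b := by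
    intro z hz
    obtain ⟨b, hbu, hzb, hgap⟩ := hcover z hz
    exact Set.mem_biUnion hbu
      ⟨hz.1, (hD_pos hz).le, hgap, mul_abs_sub_le_of_ball_inter_nonempty hβ₀ hzb hgap⟩
  have hstrip {b : Plane} (hb : b ∈ u) :
      μH[1] (strip b) ≤ ENNReal.ofReal (72 * ε) * volume (I b) := by
    refine (measure_strip_le hε hβ₀ hβ hGE hGε hy (huD hb).1 (huD hb).2.le).trans_eq ?_
    rw [Real.volume_ball, ← ENNReal.ofReal_mul (by positivity)]
    congr 1
    field_simp
    ring
  have hI : ⋃ b ∈ u, I b ⊆ Metric.ball 0 (1 + 1 / (18 * β)) := by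
    refine Set.iUnion₂_subset fun b hb w hw => ?_
    rw [Metric.mem_ball, Real.dist_eq] at hw ⊢
    have hb₁ := abs_le.1 (abs_apply_le_one (hG₁ (huD hb).1) 0)
    have hr : gap β y b / (36 * β) ≤ 1 / (18 * β) := by
      rw [div_le_div_iff₀ (by positivity) (by positivity)]
      nlinarith [hD_le_two (huD hb)]
    rw [sub_zero, abs_lt]
    constructor <;> linarith [abs_lt.1 hw]
  calc μH[1] D ≤ ∑' b : u, μH[1] (strip b) :=
        (measure_mono hD_strip).trans (measure_biUnion_le _ hu _)
    _ ≤ ∑' b : u, ENNReal.ofReal (72 * ε) * volume (I b) :=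
        ENNReal.tsum_le_tsum fun b => hstrip b.2
    _ = ENNReal.ofReal (72 * ε) * volume (⋃ b ∈ u, I b) := by
        rw [ENNReal.tsum_mul_left, measure_biUnion hu hdisj fun _ _ => measurableSet_ball]
    _ ≤ ENNReal.ofReal (72 * ε) * volume (Metric.ball (0 : ℝ) (1 + 1 / (18 * β))) := by
        gcongr
    _ ≤ ENNReal.ofReal (80 * ε / β) := by
        rw [Real.volume_ball, ← ENNReal.ofReal_mul (by positivity)]
        refine ENNReal.ofReal_le_ofReal ?_
        have h144 : 144 * ε ≤ 72 * ε / β := by rw [le_div_iff₀ hβ₀]; nlinarith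
        calc 72 * ε * (2 * (1 + 1 / (18 * β))) = 144 * ε + 8 * ε / β := by field_simp; ring
          _ ≤ 80 * ε / β := by
              rw [show 80 * ε / β = 72 * ε / β + 8 * ε / β by ring]
              linarith

lemma measure_gap_pos_le (hε : 0 ≤ ε) (hβ₀ : 0 < β) (hβ : β ≤ 1 / 2) (hGE : G ⊆ E)
    (hG₁ : G ⊆ Metric.closedBall 0 1) (hGε : ∀ x ∈ G, conicalDensity E β x ≤ ENNReal.ofReal ε)
    (hy : ∀ j, y j ∈ G) :
    μH[1] {z ∈ G | 0 < gap β y z} ≤ ENNReal.ofReal (88 * ε / β) := by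
  have hsplit : {z ∈ G | 0 < gap β y z} ⊆
      {z ∈ G | 0 < gap β y z ∧ gap β y z ≤ 12 * β * apexDist β y z} ∪
        {z ∈ G | 12 * β * apexDist β y z < gap β y z} := by
    rintro z ⟨hzG, hz⟩
    rcases le_or_gt (gap β y z) (12 * β * apexDist β y z) with h | h
    exacts [Or.inl ⟨hzG, hz, h⟩, Or.inr ⟨hzG, h⟩]
  calc _ ≤ _ := (measure_mono hsplit).trans (measure_union_le _ _)
    _ ≤ ENNReal.ofReal (16 * ε) + ENNReal.ofReal (80 * ε / β) :=
        add_le_add (measure_near_le hε hβ₀.le hβ hGE hG₁ hGε hy)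
          (measure_deep_le hε hβ₀ hβ hGE hG₁ hGε hy)
    _ ≤ ENNReal.ofReal (88 * ε / β) := by
        rw [← ENNReal.ofReal_add (by positivity) (by positivity)]
        refine ENNReal.ofReal_le_ofReal ?_
        have : 16 * ε ≤ 8 * ε / β := by rw [le_div_iff₀ hβ₀]; nlinarith
        linarith [show 88 * ε / β = 8 * ε / β + 80 * ε / β by ring]

end Envelope

section Graph

variable {ε : ℝ} {E G : Set Plane} {v : ℕ → Plane}

lemma bddAbove_range_tent (hβ : 0 ≤ β) (hv : ∀ n, v n ∈ Metric.closedBall 0 1) (t : ℝ) :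
    BddAbove (Set.range fun n => tent β (v n) t) :=
  ⟨1, Set.forall_mem_range.2 fun n =>
    (tent_le hβ _ t).trans (abs_le.1 (abs_apply_le_one (hv n) 1)).2⟩

lemma lipschitzWith_iSup_tent (hβ : 0 ≤ β) (hv : ∀ n, v n ∈ Metric.closedBall 0 1) :
    LipschitzWith (2 * β).toNNReal fun t => ⨆ n, tent β (v n) t :=
  LipschitzWith.of_le_add_mul' _ fun s t => ciSup_le fun n =>
    (tent_le_tent_add hβ (v n) s t).trans <| by
      rw [Real.dist_eq]
      gcongr
      exact le_ciSup (bddAbove_range_tent hβ hv t) n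

lemma apply_one_le_iSup_tent (hβ : 0 ≤ β) (hv : ∀ n, v n ∈ Metric.closedBall 0 1) {z : Plane}
    (hz : z ∈ closure (Set.range v)) : z 1 ≤ ⨆ n, tent β (v n) (z 0) := by
  have hclosed : IsClosed {p : Plane | tent β p (z 0) ≤ ⨆ n, tent β (v n) (z 0)} :=
    isClosed_le (continuous_tent_apply β (z 0)) continuous_const
  simpa using closure_minimal
    (Set.range_subset_iff.2 fun n => le_ciSup (bddAbove_range_tent hβ hv (z 0)) n) hclosed hz

lemma exists_gap_pos_of_lt_iSup_tent {z : Plane} (hz : z 1 < ⨆ n, tent β (v n) (z 0)) :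
    ∃ n, 0 < gap β (fun j : Fin (n + 1) => v j) z := by
  obtain ⟨n, hn⟩ := exists_lt_of_lt_ciSup hz
  exact ⟨n, sub_pos.2 (hn.trans_le
    (tent_le_envelope (y := fun j : Fin (n + 1) => v j) (Fin.last n) (z 0)))⟩

lemma monotone_gap_pos :
    Monotone fun n => {z ∈ G | 0 < gap β (fun j : Fin (n + 1) => v j) z} :=
  fun _ n hmn _ ⟨hzG, hz⟩ => ⟨hzG, hz.trans_le (sub_le_sub_right
    (envelope_comp_le (y := fun j : Fin (n + 1) => v j) (Fin.castLE (Nat.succ_le_succ hmn)) _) _)⟩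

theorem exists_lipschitzWith_measure_diff_graph_le (hε : 0 ≤ ε) (hβ₀ : 0 < β) (hβ : β ≤ 1 / 2)
    (hGE : G ⊆ E) (hG₁ : G ⊆ Metric.closedBall 0 1)
    (hGε : ∀ x ∈ G, conicalDensity E β x ≤ ENNReal.ofReal ε) :
    ∃ f : ℝ → ℝ, LipschitzWith (2 * β).toNNReal f ∧
      μH[1] (G \ {p : Plane | p 1 = f (p 0)}) ≤ ENNReal.ofReal (88 * ε / β) := by
  rcases G.eq_empty_or_nonempty with rfl | hG
  · exact ⟨0, (LipschitzWith.const 0).weaken zero_le, by simp⟩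
  have := hG.to_subtype
  obtain ⟨w, hw⟩ := TopologicalSpace.exists_dense_seq G
  set v : ℕ → Plane := fun n => w n
  have hvG (n : ℕ) : v n ∈ G := (w n).2
  have hv₁ (n : ℕ) : v n ∈ Metric.closedBall 0 1 := hG₁ (hvG n)
  have hGv : G ⊆ closure (Set.range v) := fun z hz =>
    map_mem_closure continuous_subtype_val (hw ⟨z, hz⟩) (by rintro _ ⟨n, rfl⟩; exact ⟨n, rfl⟩)
  refine ⟨fun t => ⨆ n, tent β (v n) t, lipschitzWith_iSup_tent hβ₀.le hv₁, ?_⟩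
  have hcover : G \ {p : Plane | p 1 = ⨆ n, tent β (v n) (p 0)} ⊆
      ⋃ n, {z ∈ G | 0 < gap β (fun j : Fin (n + 1) => v j) z} := by
    rintro z ⟨hzG, hz⟩
    obtain ⟨n, hn⟩ := exists_gap_pos_of_lt_iSup_tent
      ((apply_one_le_iSup_tent hβ₀.le hv₁ (hGv hzG)).lt_of_ne hz)
    exact Set.mem_iUnion.2 ⟨n, hzG, hn⟩
  calc _ ≤ _ := measure_mono hcover
    _ = ⨆ n, μH[1] {z ∈ G | 0 < gap β (fun j : Fin (n + 1) => v j) z} :=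
        monotone_gap_pos.measure_iUnion
    _ ≤ _ := iSup_le fun n => measure_gap_pos_le hε hβ₀ hβ hGE hG₁ hGε fun j => hvG j

end Graph

end TwoCones

/-- Most points of low conical density fit into a single 2β-Lipschitz graph. -/
theorem stmt7 : ∃ C : ℝ, 0 < C ∧
    ∀ (E : Set Plane), E ⊆ Metric.closedBall 0 1 →
      ∀ ε ∈ Set.Ioo (0:ℝ) 1, ∀ β ∈ Set.Ioo (0:ℝ) (1/2),
        ∃ f : ℝ → ℝ, LipschitzWith (2*β).toNNReal f ∧
          μH[1] ({x ∈ E | conicalDensity E β x ≤ ENNReal.ofReal ε}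
              \ {p : Plane | p 1 = f (p 0)}) ≤ ENNReal.ofReal (C * ε / β) :=
  ⟨88, by norm_num, fun _ hE _ hε _ hβ =>
    TwoCones.exists_lipschitzWith_measure_diff_graph_le hε.1.le hβ.1 hβ.2.le (Set.sep_subset _ _)
      (fun _ hx => hE hx.1) fun _ hx => hx.2⟩
end
end

section
/- Let β ∈ (0, 1/2], x ∈ ℝ², r > 0, and let y ∈ C_{2β}(x) with |x−y| ≥ (9/10)r. Let T_x be the tube of half-width (1/10)βr around the vertical line through x. Then T_x ∩ B(x,r) ⊂ C_β(x) ∪ C_β(y). -/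
open MeasureTheory Set Real
open scoped ENNReal NNReal

noncomputable section

/-- The tube over x is contained in the union of the two cones. -/
theorem stmt8 (β : ℝ) (hβ0 : 0 < β) (hβ : β ≤ 1/2) (x y : Plane) (r : ℝ) (hr : 0 < r)
    (hy : y ∈ cone (2*β) x) (hxy : 9/10 * r ≤ dist x y) :
    {z : Plane | |z 0 - x 0| ≤ 1/10 * β * r} ∩ Metric.closedBall x r
      ⊆ cone β x ∪ cone β y := by
  rintro z ⟨hz0, _⟩
  simp only [mem_setOf_eq] at hz0
  by_cases hx : z ∈ cone β x
  · exact Or.inl hx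
  right
  simp only [cone, mem_setOf_eq] at hy hx ⊢
  push_neg at hx
  have hdist2 : dist x y ^ 2 = (y 0 - x 0) ^ 2 + (y 1 - x 1) ^ 2 := by
    rw [EuclideanSpace.dist_eq, Real.sq_sqrt (by positivity)]
    simp [Fin.sum_univ_two, Real.dist_eq, sq_abs]
    ring
  have ha : (0:ℝ) ≤ |y 0 - x 0| := abs_nonneg _
  have hb' : (0:ℝ) ≤ |y 1 - x 1| := abs_nonneg _
  have hsa : |y 0 - x 0| ^ 2 = (y 0 - x 0) ^ 2 := sq_abs _
  have hsb : |y 1 - x 1| ^ 2 = (y 1 - x 1) ^ 2 := sq_abs _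
  have hd0 : (0:ℝ) ≤ dist x y := dist_nonneg
  have hb : β * r ≤ |y 1 - x 1| := by
    have h1 : (9/10 * r)^2 ≤ dist x y ^ 2 :=
      pow_le_pow_left₀ (by positivity) hxy 2
    have h2 : (2 * β * |y 0 - x 0|)^2 ≤ |y 1 - x 1|^2 :=
      pow_le_pow_left₀ (by positivity) hy 2
    by_contra hcon
    push_neg at hcon
    have h3 : |y 1 - x 1|^2 < (β * r)^2 := by
      have := mul_self_lt_mul_self hb' hcon
      nlinarith
    have h4 : (4 * β^2) * ((9/10*r)^2) ≤ (4 * β^2) * (dist x y ^2) :=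
      mul_le_mul_of_nonneg_left h1 (by positivity)
    have hβ2 : β^2 ≤ 1/4 := by nlinarith
    have h5 : (1 - 4*β^2) * |y 1 - x 1|^2 ≥ 0 :=
      mul_nonneg (by linarith) (sq_nonneg _)
    nlinarith [sq_nonneg (β*r)]
  have t1 : |z 0 - y 0| ≤ |z 0 - x 0| + |x 0 - y 0| := abs_sub_le _ _ _
  have t2 : |y 1 - x 1| ≤ |y 1 - z 1| + |z 1 - x 1| := abs_sub_le _ _ _
  rw [abs_sub_comm (y 1) (z 1)] at t2
  rw [abs_sub_comm (x 0) (y 0)] at t1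
  have hz0n : (0:ℝ) ≤ |z 0 - x 0| := abs_nonneg _
  nlinarith [mul_le_mul_of_nonneg_left t1 hβ0.le, hx.le, hz0, hy, hb, t2,
    mul_le_mul_of_nonneg_left hz0 hβ0.le]
end
end

section
/- Let φ₁, φ₂ : ℝ → ℝ² be C¹ curves parametrized by arclength, and define Ψ(s₁,s₂) = (θ,t) implicitly by π_θ(φ₁(s₁)) = π_θ(φ₂(s₂)) = t (on the open set where φ₁(s₁) ≠ φ₂(s₂)). Then the Jacobian determinant satisfies |JΨ(s₁,s₂)| = |e_θ·φ₁'(s₁)| · |e_θ·φ₂'(s₂)| / |φ₁(s₁) − φ₂(s₂)|, where e_θ = (cos θ, sin θ). -/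
/-
Each coordinate s_i moves only the point φ_i(s_i) in its own defining relation, so
differentiating π_θ(φ_i(s_i)) = t along the two coordinate lines gives linear equations for the
partial derivatives of θ and t, with coefficients e_θ·φ_i' and e_θ^⊥·φ_i (the θ-derivative of
π_θ is e_θ^⊥·). Three of them already force det JΨ · e_θ^⊥·(φ₁ − φ₂) = −(e_θ·φ₁')(e_θ·φ₂'), and
since φ₁ − φ₂ ⊥ e_θ, the factor |e_θ^⊥·(φ₁ − φ₂)| is the distance |φ₁ − φ₂|.
-/

open MeasureTheory Set Real
open scoped ENNReal NNReal

noncomputable section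

def projPerp (θ : ℝ) (x : Plane) : ℝ := -x 0 * Real.sin θ + x 1 * Real.cos θ

@[simp]
lemma proj_zero (θ : ℝ) : proj θ 0 = 0 := by
  simp [proj]

lemma proj_sub (θ : ℝ) (x y : Plane) : proj θ (x - y) = proj θ x - proj θ y := by
  simp only [proj, PiLp.sub_apply]; ring

lemma projPerp_sub (θ : ℝ) (x y : Plane) : projPerp θ (x - y) = projPerp θ x - projPerp θ y := by
  simp only [projPerp, PiLp.sub_apply]; ring

lemma proj_sq_add_projPerp_sq (θ : ℝ) (x : Plane) :
    proj θ x ^ 2 + projPerp θ x ^ 2 = ‖x‖ ^ 2 := by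
  rw [EuclideanSpace.norm_sq_eq, Fin.sum_univ_two, Real.norm_eq_abs, Real.norm_eq_abs, sq_abs,
    sq_abs, proj, projPerp]
  linear_combination (x 0 ^ 2 + x 1 ^ 2) * Real.sin_sq_add_cos_sq θ

lemma dist_eq_abs_projPerp_sub {θ : ℝ} {x y : Plane} (h : proj θ x = proj θ y) :
    dist x y = |projPerp θ x - projPerp θ y| := by
  have hxy := proj_sq_add_projPerp_sq θ (x - y)
  rw [proj_sub, h, sub_self, projPerp_sub] at hxy
  rw [dist_eq_norm, ← Real.sqrt_sq (norm_nonneg _), ← hxy, zero_pow two_ne_zero, zero_add,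
    Real.sqrt_sq_eq_abs]

lemma HasDerivAt.proj {θ : ℝ → ℝ} {γ : ℝ → Plane} {θ' s : ℝ} {v : Plane}
    (hθ : HasDerivAt θ θ' s) (hγ : HasDerivAt γ v s) :
    HasDerivAt (fun s => proj (θ s) (γ s)) (projPerp (θ s) (γ s) * θ' + proj (θ s) v) s := by
  have hγ₀ : HasDerivAt (fun s => γ s 0) (v 0) s :=
    (EuclideanSpace.proj (0 : Fin 2) : Plane →L[ℝ] ℝ).hasFDerivAt.comp_hasDerivAt s hγ
  have hγ₁ : HasDerivAt (fun s => γ s 1) (v 1) s :=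
    (EuclideanSpace.proj (1 : Fin 2) : Plane →L[ℝ] ℝ).hasFDerivAt.comp_hasDerivAt s hγ
  refine ((hγ₀.mul hθ.cos).add (hγ₁.mul hθ.sin)).congr_deriv ?_
  simp only [projPerp, _root_.proj]
  ring

lemma projPerp_mul_add_proj_eq_of_proj_eq {θ τ : ℝ → ℝ} {γ : ℝ → Plane} {θ' τ' s : ℝ}
    {v : Plane} (hθ : HasDerivAt θ θ' s) (hτ : HasDerivAt τ τ' s) (hγ : HasDerivAt γ v s)
    (h : ∀ s, proj (θ s) (γ s) = τ s) :
    projPerp (θ s) (γ s) * θ' + proj (θ s) v = τ' :=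
  (hθ.proj hγ).unique (by simpa only [h] using hτ)

lemma LinearMap.det_prod {R : Type*} [CommRing R] (f : R × R →ₗ[R] R × R) :
    LinearMap.det f = (f (1, 0)).1 * (f (0, 1)).2 - (f (0, 1)).1 * (f (1, 0)).2 := by
  rw [← LinearMap.det_toMatrix (Module.Basis.finTwoProd R), Matrix.det_fin_two]
  simp [LinearMap.toMatrix_apply]

/-- With `pᵢ = ∂θ/∂sᵢ`, `qᵢ = ∂t/∂sᵢ`, `cᵢ = e_θ^⊥·φᵢ`, `a = e_θ·φ₁'`, `b = e_θ·φ₂'`, the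
hypotheses are three of the four differentiated relations. -/
lemma jacobian_mul_sub_eq_neg_mul {p₁ q₁ p₂ q₂ a b c₁ c₂ : ℝ} (h₁ : c₁ * p₁ + a = q₁)
    (h₂ : c₂ * p₁ = q₁) (h₃ : c₂ * p₂ + b = q₂) :
    (p₁ * q₂ - p₂ * q₁) * (c₁ - c₂) = -(a * b) := by
  linear_combination b * h₁ + ((c₁ - c₂) * p₂ - b) * h₂ - (c₁ - c₂) * p₁ * h₃

theorem stmt13_general (φ₁ φ₂ : ℝ → Plane) (Ψ : ℝ × ℝ → ℝ × ℝ)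
    (hΨ : ∀ p : ℝ × ℝ, proj (Ψ p).1 (φ₁ p.1) = (Ψ p).2 ∧ proj (Ψ p).1 (φ₂ p.2) = (Ψ p).2)
    (s₁ s₂ : ℝ) (d₁ d₂ : Plane)
    (hd₁ : HasDerivAt φ₁ d₁ s₁) (hd₂ : HasDerivAt φ₂ d₂ s₂)
    (hne : φ₁ s₁ ≠ φ₂ s₂)
    (D : (ℝ × ℝ) →L[ℝ] (ℝ × ℝ)) (hD : HasFDerivAt Ψ D (s₁, s₂)) :
    |LinearMap.det (D : (ℝ × ℝ) →ₗ[ℝ] (ℝ × ℝ))|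
      = |proj (Ψ (s₁, s₂)).1 d₁| * |proj (Ψ (s₁, s₂)).1 d₂| / dist (φ₁ s₁) (φ₂ s₂) := by
  have hΨ₁ : HasDerivAt (fun s => Ψ (s, s₂)) (D (1, 0)) s₁ :=
    hD.comp_hasDerivAt s₁ ((hasDerivAt_id s₁).prodMk (hasDerivAt_const s₁ s₂))
  have hΨ₂ : HasDerivAt (fun s => Ψ (s₁, s)) (D (0, 1)) s₂ :=
    hD.comp_hasDerivAt s₂ ((hasDerivAt_const s₂ s₁).prodMk (hasDerivAt_id s₂))
  have e₁ := projPerp_mul_add_proj_eq_of_proj_eq (hasFDerivAt_fst.comp_hasDerivAt s₁ hΨ₁)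
    (hasFDerivAt_snd.comp_hasDerivAt s₁ hΨ₁) hd₁ fun s => (hΨ (s, s₂)).1
  have e₂ := projPerp_mul_add_proj_eq_of_proj_eq (hasFDerivAt_fst.comp_hasDerivAt s₁ hΨ₁)
    (hasFDerivAt_snd.comp_hasDerivAt s₁ hΨ₁) (hasDerivAt_const s₁ (φ₂ s₂)) fun s => (hΨ (s, s₂)).2
  have e₃ := projPerp_mul_add_proj_eq_of_proj_eq (hasFDerivAt_fst.comp_hasDerivAt s₂ hΨ₂)
    (hasFDerivAt_snd.comp_hasDerivAt s₂ hΨ₂) hd₂ fun s => (hΨ (s₁, s)).2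
  simp only [Function.comp_apply, ContinuousLinearMap.coe_fst', ContinuousLinearMap.coe_snd',
    proj_zero, add_zero] at e₁ e₂ e₃
  have hdist := dist_eq_abs_projPerp_sub ((hΨ (s₁, s₂)).1.trans (hΨ (s₁, s₂)).2.symm)
  have hc : dist (φ₁ s₁) (φ₂ s₂) ≠ 0 := dist_ne_zero.2 hne
  rw [hdist] at hc ⊢
  rw [eq_div_iff hc, ← abs_mul, ← abs_mul, LinearMap.det_prod, ContinuousLinearMap.coe_coe,
    jacobian_mul_sub_eq_neg_mul e₁ e₂ e₃, abs_neg]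

/-- Jacobian formula for the implicit map (s₁,s₂) ↦ (θ,t). -/
theorem stmt13 (φ₁ φ₂ : ℝ → Plane) (Ψ : ℝ × ℝ → ℝ × ℝ)
    (hΨ : ∀ p : ℝ × ℝ, proj (Ψ p).1 (φ₁ p.1) = (Ψ p).2 ∧ proj (Ψ p).1 (φ₂ p.2) = (Ψ p).2)
    (s₁ s₂ : ℝ) (d₁ d₂ : Plane)
    (hd₁ : HasDerivAt φ₁ d₁ s₁) (hd₂ : HasDerivAt φ₂ d₂ s₂)
    (hu₁ : ‖d₁‖ = 1) (hu₂ : ‖d₂‖ = 1)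
    (hne : φ₁ s₁ ≠ φ₂ s₂)
    (D : (ℝ × ℝ) →L[ℝ] (ℝ × ℝ)) (hD : HasFDerivAt Ψ D (s₁, s₂)) :
    |LinearMap.det (D : (ℝ × ℝ) →ₗ[ℝ] (ℝ × ℝ))|
      = |proj (Ψ (s₁, s₂)).1 d₁| * |proj (Ψ (s₁, s₂)).1 d₂| / dist (φ₁ s₁) (φ₂ s₂) :=
  stmt13_general φ₁ φ₂ Ψ hΨ s₁ s₂ d₁ d₂ hd₁ hd₂ hne D hD
end
end

section
/- Any compact connected set Γ ⊂ ℝ² with H¹(Γ) < ∞ admits a surjective parametrization γ : [0,1] → ℝ² with γ([0,1]) = Γ and Lipschitz constant Lip(γ) ≤ 32·H¹(Γ). -/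
/-!
For `ε > 0` take a maximal `ε`-separated set `s ⊆ Γ`. Since `Γ` is connected, the graph on `s`
joining points at distance `≤ 2ε` is connected, so a walk going back and forth along a spanning
tree visits all of `s` in fewer than `2 #s` steps. The balls `B(x, ε/2)`, `x ∈ s`, are disjoint and
each contains length `≥ ε/2` of `Γ`, so `#s · ε ≤ 2 H¹(Γ)`. The polygonal path along the walk, run
over `[0, 1]`, is therefore `8 H¹(Γ)`-Lipschitz and `2ε`-close to `Γ` in the Hausdorff sense.
A pointwise limit of these paths along an ultrafilter, as `ε → 0`, parametrizes `Γ` with the same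
Lipschitz constant.
-/

open MeasureTheory Set Real
open scoped ENNReal NNReal

noncomputable section

open Filter Topology Metric
open scoped Finset

theorem LipschitzOnWith.Icc_union_Icc {X : Type*} [PseudoMetricSpace X] {f : ℝ → X} {K : ℝ≥0}
    {a b c : ℝ} (hab : LipschitzOnWith K f (Icc a b)) (hbc : LipschitzOnWith K f (Icc b c)) :
    LipschitzOnWith K f (Icc a c) := by
  have hordered : ∀ s ∈ Icc a c, ∀ t ∈ Icc a c, s ≤ t → dist (f s) (f t) ≤ K * dist s t := by
    intro s hs t ht hst
    rcases le_total t b with htb | hbt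
    · exact hab.dist_le_mul s ⟨hs.1, hst.trans htb⟩ t ⟨ht.1, htb⟩
    rcases le_total b s with hbs | hsb
    · exact hbc.dist_le_mul s ⟨hbs, hs.2⟩ t ⟨hbt, ht.2⟩
    calc dist (f s) (f t) ≤ dist (f s) (f b) + dist (f b) (f t) := dist_triangle _ _ _
      _ ≤ K * dist s b + K * dist b t :=
        add_le_add (hab.dist_le_mul s ⟨hs.1, hsb⟩ b ⟨hs.1.trans hsb, le_rfl⟩)
          (hbc.dist_le_mul b ⟨le_rfl, hbt.trans ht.2⟩ t ⟨hbt, ht.2⟩)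
      _ = K * dist s t := by
        rw [Real.dist_eq, Real.dist_eq, Real.dist_eq, abs_of_nonpos (by linarith),
          abs_of_nonpos (by linarith), abs_of_nonpos (by linarith)]
        ring
  refine LipschitzOnWith.of_dist_le_mul fun s hs t ht => ?_
  rcases le_total s t with hst | hts
  · exact hordered s hs t ht hst
  · rw [dist_comm, dist_comm s]
    exact hordered t ht s hs hts

section Polygonal

variable {E : Type*} [NormedAddCommGroup E] [NormedSpace ℝ E]

def polygonal (g : ℕ → E) (t : ℝ) : E :=
  AffineMap.lineMap (g ⌊t⌋₊) (g (⌊t⌋₊ + 1)) (t - ⌊t⌋₊)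

lemma polygonal_natCast (g : ℕ → E) (k : ℕ) : polygonal g k = g k := by
  simp [polygonal]

lemma polygonal_eqOn_Icc (g : ℕ → E) (k : ℕ) :
    EqOn (polygonal g) (fun t => AffineMap.lineMap (g k) (g (k + 1)) (t - k)) (Icc k (k + 1)) := by
  intro t ht
  rcases ht.2.lt_or_eq with hlt | rfl
  · have hfloor : ⌊t⌋₊ = k := (Nat.floor_eq_iff (by linarith [ht.1, k.cast_nonneg (α := ℝ)])).2
      ⟨ht.1, hlt⟩
    simp [polygonal, hfloor]
  · have := polygonal_natCast g (k + 1)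
    push_cast at this
    simp [this]

lemma lipschitzOnWith_polygonal (g : ℕ → E) {c : ℝ≥0} {n : ℕ}
    (hg : ∀ i < n, dist (g i) (g (i + 1)) ≤ c) :
    LipschitzOnWith c (polygonal g) (Icc 0 n) := by
  induction n with
  | zero =>
    refine LipschitzOnWith.of_dist_le_mul fun s hs t ht => ?_
    simp only [Nat.cast_zero, Icc_self, mem_singleton_iff] at hs ht
    simp [hs, ht]
  | succ n ih =>
    have segment : LipschitzOnWith c (polygonal g) (Icc n (n + 1)) := by
      refine LipschitzOnWith.of_dist_le_mul fun s hs t ht => ?_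
      rw [polygonal_eqOn_Icc g n hs, polygonal_eqOn_Icc g n ht, dist_lineMap_lineMap,
        dist_sub_right, mul_comm]
      exact mul_le_mul_of_nonneg_right (hg n n.lt_succ_self) dist_nonneg
    push_cast
    exact (ih fun i hi => hg i (by omega)).Icc_union_Icc segment

lemma List.exists_lipschitzOnWith_path {l : List E} (hl : l ≠ []) {c : ℝ≥0}
    (hchain : l.IsChain (fun a b => dist a b ≤ c)) :
    ∃ γ : ℝ → E, LipschitzOnWith (c * (l.length - 1 : ℕ)) γ (Icc 0 1) ∧
      (∀ x ∈ l, ∃ t ∈ Icc (0 : ℝ) 1, γ t = x) ∧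
      ∀ t ∈ Icc (0 : ℝ) 1, ∃ x ∈ l, dist (γ t) x ≤ c := by
  set n := l.length - 1
  have hlen : 0 < l.length := List.length_pos_iff.2 hl
  set g : ℕ → E := fun i => l.getD i 0
  have hg_get : ∀ i (hi : i < l.length), g i = l[i] := fun i hi => List.getD_eq_getElem l 0 hi
  have hpoly : LipschitzOnWith c (polygonal g) (Icc 0 n) :=
    lipschitzOnWith_polygonal g fun i hi => by
      rw [hg_get i (by omega), hg_get (i + 1) (by omega)]
      exact hchain.getElem i (by omega)
  have hscale : MapsTo (fun t : ℝ => (n : ℝ) * t) (Icc 0 1) (Icc 0 n) := fun t ht =>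
    ⟨mul_nonneg n.cast_nonneg ht.1, mul_le_of_le_one_right n.cast_nonneg ht.2⟩
  refine ⟨fun t => polygonal g (n * t), ?_, ?_, ?_⟩
  · refine LipschitzOnWith.of_dist_le_mul fun s hs t ht => ?_
    calc dist (polygonal g (n * s)) (polygonal g (n * t)) ≤ c * dist ((n : ℝ) * s) (n * t) :=
          hpoly.dist_le_mul _ (hscale hs) _ (hscale ht)
      _ = (c * n : ℝ≥0) * dist s t := by
        rw [Real.dist_eq, Real.dist_eq, ← mul_sub, abs_mul, Nat.abs_cast]
        push_cast
        ring
  · intro x hx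
    obtain ⟨i, hi, rfl⟩ := List.getElem_of_mem hx
    refine ⟨i / n, ⟨by positivity, div_le_one_of_le₀ (by exact_mod_cast (by omega : i ≤ n))
      n.cast_nonneg⟩, ?_⟩
    have hi_eq : (n : ℝ) * (i / n) = i := by
      rcases Nat.eq_zero_or_pos n with h0 | hpos
      · obtain rfl : i = 0 := by omega
        simp
      · exact mul_div_cancel₀ _ (by positivity)
    simp only [hi_eq, polygonal_natCast, hg_get i hi]
  · intro t ht
    set u := (n : ℝ) * t
    have hu := hscale ht
    have hk : ⌊u⌋₊ ≤ n := Nat.floor_le_of_le hu.2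
    refine ⟨l[⌊u⌋₊], List.getElem_mem _, ?_⟩
    rw [← hg_get _ (by omega), ← polygonal_natCast g]
    calc dist (polygonal g u) (polygonal g ⌊u⌋₊) ≤ c * dist u ⌊u⌋₊ :=
          hpoly.dist_le_mul _ hu _ ⟨Nat.cast_nonneg _, by exact_mod_cast hk⟩
      _ ≤ c * 1 := by
        gcongr
        rw [Real.dist_eq, abs_of_nonneg (sub_nonneg.2 (Nat.floor_le hu.1))]
        linarith [Nat.lt_floor_add_one u]
      _ = c := mul_one _

end Polygonal

lemma List.IsChain.exists_detour {α : Type*} {R : α → α → Prop} {l : List α} (hl : l.IsChain R)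
    {a b : α} (ha : a ∈ l) (hab : R a b) (hba : R b a) :
    ∃ l' : List α, (∀ x, x ∈ l' ↔ x = b ∨ x ∈ l) ∧ l'.IsChain R ∧ l'.length = l.length + 2 := by
  obtain ⟨l₁, l₂, rfl⟩ := List.append_of_mem ha
  refine ⟨l₁ ++ a :: b :: a :: l₂, fun x => ?_, ?_, by simp; omega⟩
  · simp only [List.mem_append, List.mem_cons]
    tauto
  · simp only [List.isChain_append, List.isChain_cons_cons, List.head?_cons] at hl ⊢
    tauto

theorem Finset.exists_isChain_of_exists_rel {α : Type*} [DecidableEq α] {R : α → α → Prop}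
    [Std.Symm R] {s : Finset α} (hs : s.Nonempty)
    (hconn : ∀ t ⊆ s, t.Nonempty → t ≠ s → ∃ a ∈ t, ∃ b ∈ s \ t, R a b) :
    ∃ l : List α, (∀ x, x ∈ l ↔ x ∈ s) ∧ l.IsChain R ∧ l.length < 2 * #s := by
  obtain ⟨a₀, ha₀⟩ := hs
  suffices grow : ∀ k, 1 ≤ k → k ≤ #s → ∃ t ⊆ s, #t = k ∧
      ∃ l : List α, (∀ x, x ∈ l ↔ x ∈ t) ∧ l.IsChain R ∧ l.length < 2 * k by
    obtain ⟨t, hts, hcard, hl⟩ := grow #s (Finset.card_pos.2 ⟨a₀, ha₀⟩) le_rfl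
    rwa [Finset.eq_of_subset_of_card_le hts hcard.ge] at hl
  intro k hk
  induction k, hk using Nat.le_induction with
  | base =>
    exact fun _ => ⟨{a₀}, by simpa using ha₀, by simp, [a₀], by simp, List.isChain_singleton a₀,
      by simp⟩
  | succ k hk ih =>
    intro hks
    obtain ⟨t, hts, rfl, l, hl, hchain, hlen⟩ := ih (by omega)
    have htne : t.Nonempty := Finset.card_pos.1 (by omega)
    obtain ⟨a, ha, b, hb, hab⟩ := hconn t hts htne (by rintro rfl; omega)
    rw [Finset.mem_sdiff] at hb
    obtain ⟨l', hl', hchain', hlen'⟩ := hchain.exists_detour ((hl a).2 ha) hab (symm hab)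
    refine ⟨insert b t, Finset.insert_subset hb.1 hts, Finset.card_insert_of_notMem hb.2, l',
      fun x => by rw [hl', hl, Finset.mem_insert], hchain', by omega⟩

section Metric

variable {X : Type*} [MetricSpace X]

lemma IsPreconnected.exists_dist_le_of_isCover [DecidableEq X] {Γ : Set X}
    (hΓ : IsPreconnected Γ) {s : Finset X} (hsΓ : ↑s ⊆ Γ) {ε : ℝ≥0} (hcover : IsCover ε Γ ↑s)
    {t : Finset X} (hts : t ⊆ s) (ht : t.Nonempty) (hts' : t ≠ s) :
    ∃ a ∈ t, ∃ b ∈ s \ t, dist a b ≤ 2 * ε := by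
  set A := ⋃ a ∈ t, closedBall a ε
  set B := ⋃ b ∈ s \ t, closedBall b ε
  have hAB : Γ ⊆ A ∪ B := by
    intro x hx
    obtain ⟨y, hy, hxy⟩ := Set.mem_iUnion₂.1 (hcover.subset_iUnion_closedBall hx)
    by_cases hyt : y ∈ t
    · exact Or.inl (Set.mem_biUnion hyt hxy)
    · exact Or.inr (Set.mem_biUnion (Finset.mem_sdiff.2 ⟨hy, hyt⟩) hxy)
  have hΓA : (Γ ∩ A).Nonempty := by
    obtain ⟨a, ha⟩ := ht
    exact ⟨a, hsΓ (hts ha), Set.mem_biUnion ha (mem_closedBall_self ε.coe_nonneg)⟩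
  have hΓB : (Γ ∩ B).Nonempty := by
    obtain ⟨b, hb⟩ := Finset.sdiff_nonempty.2 fun h => hts' (hts.antisymm h)
    exact ⟨b, hsΓ (Finset.mem_sdiff.1 hb).1, Set.mem_biUnion hb (mem_closedBall_self ε.coe_nonneg)⟩
  obtain ⟨z, -, hzA, hzB⟩ := isPreconnected_closed_iff.1 hΓ A B
    (isClosed_biUnion_finset fun _ _ => isClosed_closedBall)
    (isClosed_biUnion_finset fun _ _ => isClosed_closedBall) hAB hΓA hΓB
  obtain ⟨a, ha, hza⟩ := Set.mem_iUnion₂.1 hzA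
  obtain ⟨b, hb, hzb⟩ := Set.mem_iUnion₂.1 hzB
  refine ⟨a, ha, b, hb, ?_⟩
  calc dist a b ≤ dist z a + dist z b := dist_triangle_left a b z
    _ ≤ ε + ε := add_le_add hza hzb
    _ = 2 * ε := (two_mul _).symm

variable [MeasurableSpace X] [BorelSpace X]

lemma IsPreconnected.ofReal_le_hausdorffMeasure_inter_ball {Γ : Set X} (hΓ : IsPreconnected Γ)
    {x y : X} (hx : x ∈ Γ) (hy : y ∈ Γ) {r : ℝ} (hr : r ≤ dist y x) :
    ENNReal.ofReal r ≤ μH[1] (Γ ∩ ball x r) := by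
  have hdist : LipschitzWith 1 (dist · x) := LipschitzWith.dist_left x
  have hIco : Ico 0 r ⊆ (dist · x) '' (Γ ∩ ball x r) := by
    intro u hu
    obtain ⟨z, hz, rfl⟩ := hΓ.intermediate_value hx hy hdist.continuous.continuousOn
      (by simpa using ⟨hu.1, hu.2.le.trans hr⟩ : u ∈ Icc (dist x x) (dist y x))
    exact ⟨z, ⟨hz, hu.2⟩, rfl⟩
  calc ENNReal.ofReal r = μH[1] (Ico 0 r) := by
        rw [hausdorffMeasure_real, Real.volume_Ico, sub_zero]
    _ ≤ μH[1] ((dist · x) '' (Γ ∩ ball x r)) := measure_mono hIco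
    _ ≤ μH[1] (Γ ∩ ball x r) := by
        simpa using hdist.hausdorffMeasure_image_le zero_le_one (Γ ∩ ball x r)

lemma IsPreconnected.card_mul_le_two_mul_hausdorffMeasure {Γ : Set X} (hΓ : IsPreconnected Γ)
    (hΓc : IsClosed Γ) {s : Finset X} (hsΓ : ↑s ⊆ Γ) (hs : s.Nontrivial) {ε : ℝ≥0}
    (hsep : IsSeparated ε (s : Set X)) :
    (#s : ℝ≥0∞) * ε ≤ 2 * μH[1] Γ := by
  set r : ℝ := ε / 2 with hr
  have hsep' : ∀ a ∈ s, ∀ b ∈ s, a ≠ b → (ε : ℝ) < dist a b := fun a ha b hb hab => by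
    have : (ε : ℝ≥0∞) < edist a b := hsep ha hb hab
    rwa [edist_nndist, ENNReal.coe_lt_coe, ← NNReal.coe_lt_coe, coe_nndist] at this
  have hfar : ∀ x ∈ s, ENNReal.ofReal r ≤ μH[1] (Γ ∩ ball x r) := fun x hx => by
    obtain ⟨y, hy, hyx⟩ := hs.exists_ne x
    exact hΓ.ofReal_le_hausdorffMeasure_inter_ball (hsΓ hx) (hsΓ hy)
      (by linarith [hsep' y hy x hx hyx, ε.coe_nonneg, hr])
  have hdisj : (s : Set X).PairwiseDisjoint (fun x => Γ ∩ ball x r) := by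
    intro a ha b hb hab
    refine Set.disjoint_left.2 fun z hza hzb => ?_
    have := hsep' a ha b hb hab
    linarith [dist_triangle_left a b z, mem_ball.1 hza.2, mem_ball.1 hzb.2, hr]
  have hsum : (#s : ℝ≥0∞) * ENNReal.ofReal r ≤ μH[1] Γ :=
    calc (#s : ℝ≥0∞) * ENNReal.ofReal r ≤ ∑ x ∈ s, μH[1] (Γ ∩ ball x r) := by
          rw [← nsmul_eq_mul, ← Finset.sum_const]
          exact Finset.sum_le_sum hfar
      _ = μH[1] (⋃ x ∈ s, Γ ∩ ball x r) := (measure_biUnion_finset hdisj fun x _ =>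
          (hΓc.measurableSet.inter measurableSet_ball)).symm
      _ ≤ μH[1] Γ := measure_mono (Set.iUnion₂_subset fun _ _ => Set.inter_subset_left)
  have hε : (ε : ℝ≥0∞) = 2 * ENNReal.ofReal r := by
    rw [ENNReal.ofReal_div_of_pos two_pos, ENNReal.ofReal_coe_nnreal, ENNReal.ofReal_ofNat,
      ENNReal.mul_div_cancel two_ne_zero ENNReal.ofNat_ne_top]
  calc (#s : ℝ≥0∞) * ε = 2 * (#s * ENNReal.ofReal r) := by rw [hε]; ring
    _ ≤ 2 * μH[1] Γ := by gcongr

end Metric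

lemma IsCompact.packingNumber_ne_top {X : Type*} [PseudoEMetricSpace X] {Γ : Set X}
    (hΓ : IsCompact Γ) {ε : ℝ≥0} (hε : ε ≠ 0) : packingNumber ε Γ ≠ ⊤ := by
  obtain ⟨N, -, hN, hcover⟩ := exists_finite_isCover_of_isCompact (ε := ε / 2) (by simpa using hε) hΓ
  refine ne_top_of_le_ne_top hN.encard_lt_top.ne ?_
  calc packingNumber ε Γ = packingNumber (2 * (ε / 2)) Γ := by rw [mul_div_cancel₀ _ two_ne_zero]
    _ ≤ externalCoveringNumber (ε / 2) Γ := packingNumber_two_mul_le_externalCoveringNumber _ _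
    _ ≤ N.encard := hcover.externalCoveringNumber_le_encard

theorem IsCompact.exists_isChain_isCover {X : Type*} [MetricSpace X] [MeasurableSpace X]
    [BorelSpace X] {Γ : Set X} (hΓc : IsCompact Γ) (hΓ : IsPreconnected Γ) (hne : Γ.Nonempty)
    {ε : ℝ≥0} (hε : ε ≠ 0) :
    ∃ l : List X, l ≠ [] ∧ (∀ x ∈ l, x ∈ Γ) ∧ (∀ y ∈ Γ, ∃ x ∈ l, dist y x ≤ ε) ∧
      l.IsChain (fun a b => dist a b ≤ 2 * ε) ∧
      ((2 * ε * (l.length - 1 : ℕ) : ℝ≥0) : ℝ≥0∞) ≤ 8 * μH[1] Γ := by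
  classical
  have hpack := hΓc.packingNumber_ne_top hε
  have hfin : (maximalSeparatedSet ε Γ).Finite :=
    Set.encard_ne_top_iff.1 (by rwa [encard_maximalSeparatedSet hpack])
  set s := hfin.toFinset
  have hsΓ : ↑s ⊆ Γ := by simpa [s] using maximalSeparatedSet_subset
  have hcover : IsCover ε Γ ↑s := by simpa [s] using isCover_maximalSeparatedSet hpack
  have hsep : IsSeparated ε (s : Set X) := by simpa [s] using isSeparated_maximalSeparatedSet
  have hnear : ∀ y ∈ Γ, ∃ x ∈ s, dist y x ≤ ε := fun y hy => by
    simpa using hcover.subset_iUnion_closedBall hy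
  have hsne : s.Nonempty := by
    obtain ⟨y, hy⟩ := hne
    obtain ⟨x, hx, -⟩ := hnear y hy
    exact ⟨x, hx⟩
  have : Std.Symm (fun a b : X => dist a b ≤ 2 * ε) := ⟨fun a b h => by rwa [dist_comm]⟩
  obtain ⟨l, hl, hchain, hlen⟩ := s.exists_isChain_of_exists_rel hsne
    fun t hts ht hts' => hΓ.exists_dist_le_of_isCover hsΓ hcover hts ht hts'
  refine ⟨l, ?_, fun x hx => hsΓ ((hl x).1 hx), fun y hy => ?_, hchain, ?_⟩
  · obtain ⟨x, hx⟩ := hsne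
    exact List.ne_nil_of_mem ((hl x).2 hx)
  · obtain ⟨x, hx, hyx⟩ := hnear y hy
    exact ⟨x, (hl x).2 hx, hyx⟩
  rcases le_or_gt #s 1 with hs1 | hs1
  · obtain h0 : l.length - 1 = 0 := by omega
    simp [h0]
  have hcard := hΓ.card_mul_le_two_mul_hausdorffMeasure hΓc.isClosed hsΓ
    (Finset.one_lt_card_iff_nontrivial.1 hs1) hsep
  have hsteps : ((l.length - 1 : ℕ) : ℝ≥0∞) ≤ 2 * #s := by exact_mod_cast (by omega)
  simp only [ENNReal.coe_mul, ENNReal.coe_ofNat, ENNReal.coe_natCast]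
  calc 2 * (ε : ℝ≥0∞) * (l.length - 1 : ℕ) ≤ 2 * ε * (2 * #s) := by gcongr
    _ = 4 * (#s * ε) := by ring
    _ ≤ 4 * (2 * μH[1] Γ) := by gcongr
    _ = 8 * μH[1] Γ := by ring

theorem IsCompact.exists_lipschitzOnWith_approx {E : Type*} [NormedAddCommGroup E]
    [NormedSpace ℝ E] [MeasurableSpace E] [BorelSpace E] {Γ : Set E} (hΓc : IsCompact Γ)
    (hΓ : IsPreconnected Γ) (hne : Γ.Nonempty) (hfin : μH[1] Γ ≠ ⊤) {ε : ℝ≥0} (hε : ε ≠ 0) :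
    ∃ γ : ℝ → E, LipschitzOnWith (8 * (μH[1] Γ).toNNReal) γ (Icc 0 1) ∧
      (∀ t ∈ Icc (0 : ℝ) 1, ∃ y ∈ Γ, dist (γ t) y ≤ 2 * ε) ∧
      ∀ x ∈ Γ, ∃ t ∈ Icc (0 : ℝ) 1, dist (γ t) x ≤ 2 * ε := by
  obtain ⟨l, hl, hlΓ, hnear, hchain, hlen⟩ := hΓc.exists_isChain_isCover hΓ hne hε
  obtain ⟨γ, hlip, hhit, hclose⟩ :=
    l.exists_lipschitzOnWith_path hl (c := 2 * ε) (hchain.imp fun _ _ h => by simpa using h)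
  refine ⟨γ, hlip.weaken ?_, fun t ht => ?_, fun x hx => ?_⟩
  · exact ENNReal.coe_le_coe.1 <| hlen.trans_eq <| by
      rw [ENNReal.coe_mul, ENNReal.coe_toNNReal hfin, ENNReal.coe_ofNat]
  · obtain ⟨y, hy, hty⟩ := hclose t ht
    exact ⟨y, hlΓ y hy, by simpa using hty⟩
  · obtain ⟨y, hy, hxy⟩ := hnear x hx
    obtain ⟨t, ht, rfl⟩ := hhit y hy
    exact ⟨t, ht, by rw [dist_comm]; linarith [ε.coe_nonneg]⟩

theorem IsCompact.exists_lipschitzOnWith_image_eq {T X : Type*} [PseudoMetricSpace T]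
    [MetricSpace X] [Nonempty X] {I : Set T} (hI : IsCompact I) {Γ : Set X} (hΓ : IsCompact Γ)
    {K : ℝ≥0} {γ : ℕ → T → X} {δ : ℕ → ℝ} (hδ : Tendsto δ atTop (𝓝 0))
    (hlip : ∀ n, LipschitzOnWith K (γ n) I)
    (hnear : ∀ n, ∀ t ∈ I, ∃ y ∈ Γ, dist (γ n t) y ≤ δ n)
    (hdense : ∀ n, ∀ x ∈ Γ, ∃ t ∈ I, dist (γ n t) x ≤ δ n) :
    ∃ γ' : T → X, γ' '' I = Γ ∧ LipschitzOnWith K γ' I := by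
  set U : Ultrafilter ℕ := Ultrafilter.of atTop
  have hδU : Tendsto δ U (𝓝 0) := hδ.mono_left (Ultrafilter.of_le _)
  have hlim : ∀ t ∈ I, ∃ x ∈ Γ, Tendsto (γ · t) U (𝓝 x) := by
    intro t ht
    choose y hyΓ hy using fun n => hnear n t ht
    obtain ⟨x, hx, hyx⟩ := hΓ.ultrafilter_le_nhds (U.map y) (tendsto_principal.2 (.of_forall hyΓ))
    have hyx : Tendsto (fun n => dist (y n) x) U (𝓝 0) := tendsto_iff_dist_tendsto_zero.1 hyx
    refine ⟨x, hx, tendsto_iff_dist_tendsto_zero.2 <| squeeze_zero (fun _ => dist_nonneg)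
      (fun n => (dist_triangle _ (y n) x).trans (add_le_add_left (hy n) _)) ?_⟩
    simpa using hδU.add hyx
  choose! γ' hγ'Γ hγ' using hlim
  refine ⟨γ', (image_subset_iff.2 hγ'Γ).antisymm fun x hx => ?_, fun s hs t ht =>
    le_of_tendsto' ((hγ' s hs).edist (hγ' t ht)) fun n => hlip n hs ht⟩
  choose t htI ht using fun n => hdense n x hx
  obtain ⟨t₀, ht₀, htt₀⟩ := hI.ultrafilter_le_nhds (U.map t) (tendsto_principal.2 (.of_forall htI))
  have htt₀ : Tendsto (fun n => dist t₀ (t n)) U (𝓝 0) := by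
    simpa [dist_comm] using tendsto_iff_dist_tendsto_zero.1 htt₀
  refine ⟨t₀, ht₀, tendsto_nhds_unique (hγ' t₀ ht₀) <| tendsto_iff_dist_tendsto_zero.2 <|
    squeeze_zero (fun _ => dist_nonneg) (fun n => (dist_triangle _ (γ n (t n)) x).trans
      (add_le_add ((hlip n).dist_le_mul _ ht₀ _ (htI n)) (ht n))) ?_⟩
  simpa using (htt₀.const_mul (K : ℝ)).add hδU

/-- Schul's parametrization lemma: compact connected sets of finite length admit
Lipschitz parametrizations with constant ≤ 32 H¹(Γ). -/
theorem stmt14 (Γ : Set Plane) (hc : IsCompact Γ) (hconn : IsConnected Γ)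
    (hfin : μH[1] Γ < ⊤) :
    ∃ γ : ℝ → Plane, γ '' Set.Icc 0 1 = Γ ∧
      ∃ K : ℝ≥0, LipschitzOnWith K γ (Set.Icc 0 1) ∧ (K : ℝ≥0∞) ≤ 32 * μH[1] Γ := by
  set ε : ℕ → ℝ≥0 := fun n => (n + 1)⁻¹
  have hε : Tendsto (fun n => 2 * (ε n : ℝ)) atTop (𝓝 0) := by
    simpa [ε] using tendsto_one_div_add_atTop_nhds_zero_nat.const_mul (2 : ℝ)
  choose γ hlip hnear hdense using fun n =>
    hc.exists_lipschitzOnWith_approx hconn.isPreconnected hconn.nonempty hfin.ne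
      (ε := ε n) (by positivity)
  obtain ⟨γ', himage, hlip'⟩ :=
    isCompact_Icc.exists_lipschitzOnWith_image_eq hc hε hlip hnear hdense
  refine ⟨γ', himage, _, hlip', ?_⟩
  rw [ENNReal.coe_mul, ENNReal.coe_toNNReal hfin.ne, ENNReal.coe_ofNat]
  gcongr
  norm_num
end
end

section
/- Let n ≥ 2 and let G_n = ⋃_{j∈[n]²} B(x_j, 1/(2πn²)) with x_j = (k/(n+1), l/(n+1)), and let μ = L²(G_n)⁻¹ · L²|_{G_n} be the normalized area measure on G_n. Then the 1-energy I₁(μ) = ∬ |x−y|⁻¹ dμ(x)dμ(y) is bounded by an absolute constant independent of n. -/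
open MeasureTheory Set Real
open scoped ENNReal NNReal

noncomputable section

/-- Grid points x_j, j ∈ [n]². -/
def gridPt (n : ℕ) (j : Fin n × Fin n) : Plane :=
  mk2 (((j.1 : ℝ) + 1) / (n + 1)) (((j.2 : ℝ) + 1) / (n + 1))

/-- The circles S_j of radius 1/(2πn²). -/
def gridCircle (n : ℕ) (j : Fin n × Fin n) : Set Plane :=
  Metric.sphere (gridPt n j) (1 / (2 * Real.pi * n ^ 2))

/-- The closed discs B_j. -/
def gridBall (n : ℕ) (j : Fin n × Fin n) : Set Plane :=
  Metric.closedBall (gridPt n j) (1 / (2 * Real.pi * n ^ 2))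

/-- E_n: union of the n² circles. -/
def gridSet (n : ℕ) : Set Plane := ⋃ j, gridCircle n j

/-- The filled-in grid region G_n. -/
def gridRegion (n : ℕ) : Set Plane := ⋃ j, gridBall n j


/-!
With `r = 1 / (2πn²)` the region `G_n` has area `n² · πr² = r / 2`, so the energy is at most
`(r / 2)⁻¹` times a bound for the potential `∫_{G_n} |x - y|⁻¹ dy` at points `x ∈ B_j`.
Cutting `B(x, 2r) ⊇ B_j` into the dyadic annuli `t / 2 < |x - y| ≤ t`, each of area at most `πt²`
and on which `|x - y|⁻¹ < 2 / t`, shows that `B_j` contributes at most `8πr`. A disc `B_k`, `k ≠ j`, contributes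
at most `πr² / (|x_j - x_k| - 2r)`, and `(|x_j - x_k| - 2r)⁻¹ ≲ n / (|a| + |b|)` where
`(a, b) = j - k`. The inequality `1 / (|a| + |b|) ≤ 2 / √((|a| + 1)(|b| + 1))` factorises the sum
over `k` into two one-dimensional sums `∑ 1 / √(|a| + 1) = O(√n)`, so the other discs contribute
`O(n² r²) = O(r)` as well.
-/

open Metric

section Potential

variable {X : Type*} [PseudoMetricSpace X]

theorem inv_edist_le_tsum_indicator_closedBall {x y : X} {ρ : ℝ} (hρ : 0 < ρ)
    (hy : y ∈ closedBall x ρ) :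
    (edist x y)⁻¹ ≤ ∑' k : ℕ,
      (closedBall x (ρ / 2 ^ k)).indicator (fun _ ↦ ENNReal.ofReal (2 ^ (k + 1) / ρ)) y := by
  rw [mem_closedBall, dist_comm] at hy
  rcases (dist_nonneg (x := x) (y := y)).eq_or_lt with hd | hd
  · have hterm : ∀ k : ℕ, ENNReal.ofReal (2 / ρ) ≤
        (closedBall x (ρ / 2 ^ k)).indicator (fun _ ↦ ENNReal.ofReal (2 ^ (k + 1) / ρ)) y := by
      intro k
      have hyk : y ∈ closedBall x (ρ / 2 ^ k) := by
        rw [mem_closedBall, dist_comm, ← hd]; positivity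
      rw [indicator_of_mem hyk]
      gcongr
      exact le_self_pow₀ one_le_two (Nat.succ_ne_zero k)
    calc (edist x y)⁻¹ ≤ ⊤ := le_top
      _ = ∑' _ : ℕ, ENNReal.ofReal (2 / ρ) :=
        (ENNReal.tsum_const_eq_top_of_ne_zero (by simpa using hρ)).symm
      _ ≤ _ := ENNReal.tsum_le_tsum hterm
  · obtain ⟨k, hk, hk'⟩ := exists_nat_pow_near (one_le_div hd |>.mpr hy) one_lt_two
    have hyk : y ∈ closedBall x (ρ / 2 ^ k) := by
      rw [mem_closedBall, dist_comm, le_div_iff₀ (by positivity), mul_comm,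
        ← le_div_iff₀ hd]
      exact hk
    refine le_trans ?_ (ENNReal.le_tsum k)
    rw [indicator_of_mem hyk, edist_dist, ← ENNReal.ofReal_inv_of_pos hd]
    gcongr
    rw [inv_le_iff_one_le_mul₀ hd, div_mul_eq_mul_div, one_le_div hρ]
    rw [div_lt_iff₀ hd] at hk'
    exact hk'.le

variable [MeasurableSpace X] [OpensMeasurableSpace X] {μ : Measure X}

theorem setLIntegral_closedBall_inv_edist_le {x : X} {c ρ : ℝ} (hρ : 0 < ρ)
    (hμ : ∀ r, 0 < r → μ (closedBall x r) ≤ ENNReal.ofReal (c * r ^ 2)) :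
    ∫⁻ y in closedBall x ρ, (edist x y)⁻¹ ∂μ ≤ ENNReal.ofReal (4 * c * ρ) := by
  have hterm : ∀ k : ℕ, ENNReal.ofReal (2 ^ (k + 1) / ρ) * μ (closedBall x (ρ / 2 ^ k))
      ≤ ENNReal.ofReal (2 * c * ρ) * 2⁻¹ ^ k := by
    intro k
    calc ENNReal.ofReal (2 ^ (k + 1) / ρ) * μ (closedBall x (ρ / 2 ^ k))
        ≤ ENNReal.ofReal (2 ^ (k + 1) / ρ) * ENNReal.ofReal (c * (ρ / 2 ^ k) ^ 2) := by
          gcongr; exact hμ _ (by positivity)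
      _ = ENNReal.ofReal (2 * c * ρ * (2⁻¹) ^ k) := by
          rw [← ENNReal.ofReal_mul (by positivity), inv_pow]
          congr 1
          field_simp
          ring
      _ = ENNReal.ofReal (2 * c * ρ) * 2⁻¹ ^ k := by
          rw [ENNReal.ofReal_mul' (by positivity), ENNReal.ofReal_pow (by norm_num),
            ENNReal.ofReal_inv_of_pos two_pos, ENNReal.ofReal_ofNat]
  calc ∫⁻ y in closedBall x ρ, (edist x y)⁻¹ ∂μ
      ≤ ∫⁻ y in closedBall x ρ, ∑' k : ℕ,
          (closedBall x (ρ / 2 ^ k)).indicator (fun _ ↦ ENNReal.ofReal (2 ^ (k + 1) / ρ)) y ∂μ :=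
        setLIntegral_mono' measurableSet_closedBall
          fun y hy ↦ inv_edist_le_tsum_indicator_closedBall hρ hy
    _ ≤ ∫⁻ y, ∑' k : ℕ,
          (closedBall x (ρ / 2 ^ k)).indicator (fun _ ↦ ENNReal.ofReal (2 ^ (k + 1) / ρ)) y ∂μ :=
        setLIntegral_le_lintegral _ _
    _ = ∑' k : ℕ, ENNReal.ofReal (2 ^ (k + 1) / ρ) * μ (closedBall x (ρ / 2 ^ k)) := by
        rw [lintegral_tsum fun k ↦
          (measurable_const.indicator measurableSet_closedBall).aemeasurable]
        simp only [lintegral_indicator_const measurableSet_closedBall]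
    _ ≤ ∑' k : ℕ, ENNReal.ofReal (2 * c * ρ) * 2⁻¹ ^ k := ENNReal.tsum_le_tsum hterm
    _ = ENNReal.ofReal (4 * c * ρ) := by
        rw [ENNReal.tsum_mul_left, ENNReal.tsum_geometric, ENNReal.one_sub_inv_two, inv_inv,
          ← ENNReal.ofReal_ofNat 2, ← ENNReal.ofReal_mul' zero_le_two]
        ring_nf

theorem setLIntegral_closedBall_inv_edist_le_of_dist {a b x : X} {r s : ℝ}
    (hx : x ∈ closedBall a r) (hab : r + s < dist a b) :
    ∫⁻ y in closedBall b s, (edist x y)⁻¹ ∂μ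
      ≤ ENNReal.ofReal ((dist a b - (r + s))⁻¹) * μ (closedBall b s) := by
  rw [← setLIntegral_const]
  refine setLIntegral_mono' measurableSet_closedBall fun y hy ↦ ?_
  have hgap : dist a b - (r + s) ≤ dist x y := by
    rw [mem_closedBall] at hx hy
    linarith [dist_triangle4 a x y b, dist_comm a x]
  rw [ENNReal.ofReal_inv_of_pos (by linarith), edist_dist]
  gcongr

end Potential

theorem lintegral_lintegral_normalized_restrict_le {α : Type*} [MeasurableSpace α]
    {μ : Measure α} {s : Set α} (hs : MeasurableSet s) {K : α → α → ℝ≥0∞} {M : ℝ≥0∞}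
    (hK : ∀ x ∈ s, ∫⁻ y in s, K x y ∂μ ≤ M) :
    ∫⁻ x, ∫⁻ y, K x y ∂((μ s)⁻¹ • μ.restrict s) ∂((μ s)⁻¹ • μ.restrict s) ≤ (μ s)⁻¹ * M := by
  simp only [lintegral_smul_measure, smul_eq_mul]
  calc (μ s)⁻¹ * ∫⁻ x in s, (μ s)⁻¹ * ∫⁻ y in s, K x y ∂μ ∂μ
      ≤ (μ s)⁻¹ * ∫⁻ _ in s, (μ s)⁻¹ * M ∂μ :=
        mul_le_mul_right (setLIntegral_mono' hs fun x hx ↦ mul_le_mul_right (hK x hx) _) _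
    _ = (μ s)⁻¹ * M * ((μ s)⁻¹ * μ s) := by rw [setLIntegral_const]; ring
    _ ≤ (μ s)⁻¹ * M := mul_le_of_le_one_right' (ENNReal.inv_mul_le_one _)

section LatticeSums

open Finset

theorem sum_range_inv_sqrt_succ_le (N : ℕ) : ∑ m ∈ range N, (√((m : ℝ) + 1))⁻¹ ≤ 2 * √N := by
  have htele : ∀ m : ℕ, (√((m : ℝ) + 1))⁻¹ ≤ 2 * (√((m + 1 : ℕ) : ℝ) - √(m : ℝ)) := by
    intro m
    have hm : √(m : ℝ) ≤ √((m : ℝ) + 1) := Real.sqrt_le_sqrt (by linarith)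
    have hsq : √((m : ℝ) + 1) ^ 2 - √(m : ℝ) ^ 2 = 1 := by
      rw [Real.sq_sqrt (by positivity), Real.sq_sqrt (by positivity)]; ring
    rw [Nat.cast_succ, inv_le_iff_one_le_mul₀ (by positivity)]
    nlinarith [Real.sqrt_nonneg (m : ℝ)]
  calc ∑ m ∈ range N, (√((m : ℝ) + 1))⁻¹
      ≤ ∑ m ∈ range N, 2 * (√((m + 1 : ℕ) : ℝ) - √(m : ℝ)) := sum_le_sum fun m _ ↦ htele m
    _ = 2 * √N := by rw [← mul_sum, sum_range_sub (fun m : ℕ ↦ √(m : ℝ))]; simp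

theorem sum_fin_natAbs_sub_le {n : ℕ} (p : Fin n) {g : ℕ → ℝ} (hg : ∀ m, 0 ≤ g m) :
    ∑ q : Fin n, g ((p : ℤ) - q).natAbs ≤ 2 * ∑ m ∈ range n, g m := by
  have hmaps : ∀ q ∈ (univ : Finset (Fin n)), ((p : ℤ) - q).natAbs ∈ range n := by
    intro q _; rw [Finset.mem_range]; omega
  have hfiber : ∀ m, #{q : Fin n | ((p : ℤ) - q).natAbs = m} ≤ 2 := by
    intro m
    calc #{q : Fin n | ((p : ℤ) - q).natAbs = m}
        ≤ #({(p : ℤ) - m, (p : ℤ) + m} : Finset ℤ) := by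
          refine card_le_card_of_injOn (fun q : Fin n ↦ (q : ℤ)) ?_ ?_
          · intro q hq
            have hq : ((p : ℤ) - q).natAbs = m := by simpa using hq
            simp only [coe_insert, coe_singleton, Set.mem_insert_iff, Set.mem_singleton_iff]
            omega
          · intro q _ q' _ h
            exact Fin.ext (by simpa using h)
      _ ≤ 2 := card_le_two
  rw [← sum_fiberwise_of_maps_to hmaps, mul_sum]
  refine sum_le_sum fun m _ ↦ ?_
  rw [sum_congr rfl fun q hq ↦ by rw [(mem_filter.mp hq).2], sum_const, nsmul_eq_mul]
  exact mul_le_mul_of_nonneg_right (by exact_mod_cast hfiber m) (hg m)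

theorem sum_fin_inv_sqrt_abs_sub_le {n : ℕ} (p : Fin n) :
    ∑ q : Fin n, (√(|(p : ℝ) - q| + 1))⁻¹ ≤ 4 * √n := by
  have hcast : ∀ q : Fin n, |(p : ℝ) - q| = (((p : ℤ) - q).natAbs : ℝ) := by
    intro q; rw [Nat.cast_natAbs]; push_cast; rfl
  simp_rw [hcast]
  calc ∑ q : Fin n, (√((((p : ℤ) - q).natAbs : ℕ) + 1 : ℝ))⁻¹
      ≤ 2 * ∑ m ∈ range n, (√((m : ℝ) + 1))⁻¹ := 
        sum_fin_natAbs_sub_le p (g := fun m ↦ (√((m : ℝ) + 1))⁻¹) fun m ↦ by positivity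
    _ ≤ 4 * √n := by linarith [sum_range_inv_sqrt_succ_le n]

theorem inv_add_le_two_mul_inv_sqrt_mul_inv_sqrt {s t : ℝ} (hs : 0 ≤ s) (ht : 0 ≤ t)
    (hst : 1 ≤ s + t) : (s + t)⁻¹ ≤ 2 * ((√(s + 1))⁻¹ * (√(t + 1))⁻¹) := by
  have hprod : √(s + 1) * √(t + 1) ≤ 2 * (s + t) := by
    rw [← Real.sqrt_mul (by linarith), ← Real.sqrt_sq (by linarith : 0 ≤ 2 * (s + t))]
    exact Real.sqrt_le_sqrt (by nlinarith)
  rw [← mul_inv, ← inv_inv 2, ← mul_inv]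
  exact inv_anti₀ (by positivity) (by linarith)

theorem sum_fin_prod_inv_sqrt_le {n : ℕ} (j : Fin n × Fin n) :
    ∑ k : Fin n × Fin n,
      (√(|(j.1 : ℝ) - k.1| + 1))⁻¹ * (√(|(j.2 : ℝ) - k.2| + 1))⁻¹ ≤ 16 * n := by
  simp only [Fintype.sum_prod_type, ← sum_mul_sum]
  calc (∑ a : Fin n, (√(|(j.1 : ℝ) - a| + 1))⁻¹) * ∑ b : Fin n, (√(|(j.2 : ℝ) - b| + 1))⁻¹
      ≤ (4 * √n) * (4 * √n) :=
        mul_le_mul (sum_fin_inv_sqrt_abs_sub_le _) (sum_fin_inv_sqrt_abs_sub_le _)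
          (sum_nonneg fun _ _ ↦ by positivity) (by positivity)
    _ = 16 * n := by rw [mul_mul_mul_comm, Real.mul_self_sqrt (Nat.cast_nonneg n)]; ring

end LatticeSums

def gridRadius (n : ℕ) : ℝ := 1 / (2 * π * n ^ 2)

theorem gridBall_eq (n : ℕ) (j : Fin n × Fin n) :
    gridBall n j = closedBall (gridPt n j) (gridRadius n) := rfl

theorem gridRadius_pos {n : ℕ} (hn : n ≠ 0) : 0 < gridRadius n := by
  unfold gridRadius; positivity

theorem measurableSet_gridBall (n : ℕ) (j : Fin n × Fin n) : MeasurableSet (gridBall n j) :=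
  measurableSet_closedBall

theorem dist_gridPt (n : ℕ) (j k : Fin n × Fin n) :
    dist (gridPt n j) (gridPt n k)
      = √(((j.1 : ℝ) - k.1) ^ 2 + ((j.2 : ℝ) - k.2) ^ 2) / (n + 1) := by
  rw [EuclideanSpace.dist_eq, Fin.sum_univ_two, ← Real.sqrt_sq (by positivity : (0 : ℝ) ≤ n + 1),
    ← Real.sqrt_div' _ (by positivity)]
  congr 1
  simp only [gridPt, mk2, WithLp.equiv_symm_apply, Real.dist_eq, sq_abs, Matrix.cons_val_zero,
    Matrix.cons_val_one, Matrix.cons_val_fin_one]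
  field_simp
  ring

theorem one_le_abs_sub_of_ne {n : ℕ} {a b : Fin n} (h : a ≠ b) : 1 ≤ |(a : ℝ) - b| := by
  rcases Fin.lt_or_lt_of_ne h with h | h
  · have : (a : ℝ) + 1 ≤ b := by exact_mod_cast h
    rw [abs_sub_comm]
    linarith [le_abs_self ((b : ℝ) - a)]
  · have : (b : ℝ) + 1 ≤ a := by exact_mod_cast h
    linarith [le_abs_self ((a : ℝ) - b)]

theorem one_le_abs_sub_add_abs_sub_of_ne {n : ℕ} {j k : Fin n × Fin n} (h : j ≠ k) :
    1 ≤ |(j.1 : ℝ) - k.1| + |(j.2 : ℝ) - k.2| := by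
  by_cases h1 : j.1 = k.1
  · have := one_le_abs_sub_of_ne fun h2 ↦ h (Prod.ext h1 h2)
    linarith [abs_nonneg ((j.1 : ℝ) - k.1)]
  · linarith [one_le_abs_sub_of_ne h1, abs_nonneg ((j.2 : ℝ) - k.2)]

theorem dist_gridPt_ge (n : ℕ) (j k : Fin n × Fin n) :
    (|(j.1 : ℝ) - k.1| + |(j.2 : ℝ) - k.2|) / (2 * (n + 1)) ≤ dist (gridPt n j) (gridPt n k) := by
  set p := (j.1 : ℝ) - k.1
  set q := (j.2 : ℝ) - k.2
  have hl1_l2 : (|p| + |q|) / 2 ≤ √(p ^ 2 + q ^ 2) :=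
    Real.le_sqrt_of_sq_le (by nlinarith [sq_abs p, sq_abs q, sq_nonneg (|p| - |q|)])
  rw [dist_gridPt, ← div_div]
  exact div_le_div_of_nonneg_right hl1_l2 (by positivity)

theorem four_mul_gridRadius_le_dist {n : ℕ} (hn : 2 ≤ n) {j k : Fin n × Fin n} (h : j ≠ k) :
    4 * gridRadius n ≤ dist (gridPt n j) (gridPt n k) := by
  have hn' : (2 : ℝ) ≤ n := by exact_mod_cast hn
  calc 4 * gridRadius n ≤ 1 / (2 * (n + 1)) := by
        rw [gridRadius, mul_one_div, div_le_div_iff₀ (by positivity) (by positivity)]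
        nlinarith [pi_gt_three]
    _ ≤ (|(j.1 : ℝ) - k.1| + |(j.2 : ℝ) - k.2|) / (2 * (n + 1)) := by
        gcongr; exact one_le_abs_sub_add_abs_sub_of_ne h
    _ ≤ dist (gridPt n j) (gridPt n k) := dist_gridPt_ge n j k

theorem pairwise_disjoint_gridBall {n : ℕ} (hn : 2 ≤ n) :
    Pairwise (Function.onFun Disjoint (gridBall n)) := by
  intro j k h
  rw [Function.onFun, gridBall_eq, gridBall_eq]
  apply closedBall_disjoint_closedBall
  linarith [four_mul_gridRadius_le_dist hn h, gridRadius_pos (n := n) (by omega)]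

theorem volume_gridRegion {n : ℕ} (hn : 2 ≤ n) :
    volume (gridRegion n) = ENNReal.ofReal (gridRadius n / 2) := by
  rw [gridRegion, measure_iUnion (pairwise_disjoint_gridBall hn)
    (measurableSet_gridBall n), tsum_fintype]
  simp only [gridBall_eq, EuclideanSpace.volume_closedBall_fin_two]
  rw [Finset.sum_const, Finset.card_univ, Fintype.card_prod, Fintype.card_fin, nsmul_eq_mul,
    ← ENNReal.ofReal_pow (gridRadius_pos (by omega)).le, ← ENNReal.ofReal_natCast,
    ← ENNReal.ofReal_mul (by positivity), ← ENNReal.ofReal_mul (by positivity)]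
  have : (n : ℝ) ≠ 0 := by positivity
  congr 1
  push_cast
  rw [gridRadius]
  field_simp

theorem inv_dist_gridPt_sub_le {n : ℕ} (hn : 2 ≤ n) {j k : Fin n × Fin n} (h : j ≠ k) :
    (dist (gridPt n j) (gridPt n k) - 2 * gridRadius n)⁻¹
      ≤ 8 * (n + 1) * ((√(|(j.1 : ℝ) - k.1| + 1))⁻¹ * (√(|(j.2 : ℝ) - k.2| + 1))⁻¹) := by
  set s := |(j.1 : ℝ) - k.1| + |(j.2 : ℝ) - k.2|
  have hs : 1 ≤ s := one_le_abs_sub_add_abs_sub_of_ne h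
  have hgap : s / (4 * (n + 1)) ≤ dist (gridPt n j) (gridPt n k) - 2 * gridRadius n := by
    have h4r := four_mul_gridRadius_le_dist hn h
    have hD := dist_gridPt_ge n j k
    have : s / (4 * (n + 1)) = s / (2 * (n + 1)) / 2 := by rw [div_div]; ring_nf
    linarith
  calc (dist (gridPt n j) (gridPt n k) - 2 * gridRadius n)⁻¹
      ≤ (s / (4 * (n + 1)))⁻¹ := inv_anti₀ (by positivity) hgap
    _ = 4 * (n + 1) * s⁻¹ := by rw [inv_div]; ring
    _ ≤ 4 * (n + 1) * (2 * ((√(|(j.1 : ℝ) - k.1| + 1))⁻¹ * (√(|(j.2 : ℝ) - k.2| + 1))⁻¹)) := by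
        gcongr
        exact inv_add_le_two_mul_inv_sqrt_mul_inv_sqrt (abs_nonneg _) (abs_nonneg _) hs
    _ = _ := by ring

theorem sum_inv_dist_gridPt_sub_le {n : ℕ} (hn : 2 ≤ n) (j : Fin n × Fin n) :
    ∑ k ∈ Finset.univ.erase j, (dist (gridPt n j) (gridPt n k) - 2 * gridRadius n)⁻¹
      ≤ 128 * n * (n + 1) := by
  calc ∑ k ∈ Finset.univ.erase j, (dist (gridPt n j) (gridPt n k) - 2 * gridRadius n)⁻¹
      ≤ ∑ k ∈ Finset.univ.erase j,
          8 * (n + 1) * ((√(|(j.1 : ℝ) - k.1| + 1))⁻¹ * (√(|(j.2 : ℝ) - k.2| + 1))⁻¹) :=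
        Finset.sum_le_sum fun k hk ↦ inv_dist_gridPt_sub_le hn (Finset.ne_of_mem_erase hk).symm
    _ ≤ ∑ k : Fin n × Fin n,
          8 * (n + 1) * ((√(|(j.1 : ℝ) - k.1| + 1))⁻¹ * (√(|(j.2 : ℝ) - k.2| + 1))⁻¹) :=
        Finset.sum_le_sum_of_subset_of_nonneg (Finset.erase_subset j Finset.univ)
          fun _ _ _ ↦ by positivity
    _ ≤ 8 * (n + 1) * (16 * n) := by
        rw [← Finset.mul_sum]; gcongr; exact sum_fin_prod_inv_sqrt_le j
    _ = 128 * n * (n + 1) := by ring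

theorem setLIntegral_gridBall_inv_edist_le {n : ℕ} (hn : n ≠ 0) {j : Fin n × Fin n} {x : Plane}
    (hx : x ∈ gridBall n j) :
    ∫⁻ y in gridBall n j, (edist x y)⁻¹ ≤ ENNReal.ofReal (8 * π * gridRadius n) := by
  rw [gridBall_eq] at hx ⊢
  have hr := gridRadius_pos hn
  have hsub : closedBall (gridPt n j) (gridRadius n) ⊆ closedBall x (2 * gridRadius n) :=
    closedBall_subset_closedBall' (by rw [dist_comm]; linarith [mem_closedBall.mp hx])
  have hvol : ∀ ρ, 0 < ρ → volume (closedBall x ρ) ≤ ENNReal.ofReal (π * ρ ^ 2) := by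
    intro ρ hρ
    rw [EuclideanSpace.volume_closedBall_fin_two, ← ENNReal.ofReal_pow hρ.le,
      ← ENNReal.ofReal_mul (by positivity), mul_comm]
  calc ∫⁻ y in closedBall (gridPt n j) (gridRadius n), (edist x y)⁻¹
      ≤ ∫⁻ y in closedBall x (2 * gridRadius n), (edist x y)⁻¹ := lintegral_mono_set hsub
    _ ≤ ENNReal.ofReal (4 * π * (2 * gridRadius n)) :=
        setLIntegral_closedBall_inv_edist_le (by positivity) hvol
    _ = ENNReal.ofReal (8 * π * gridRadius n) := by ring_nf

theorem lintegral_gridRegion_inv_edist_le {n : ℕ} (hn : 2 ≤ n) {j : Fin n × Fin n} {x : Plane}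
    (hx : x ∈ gridBall n j) :
    ∫⁻ y in gridRegion n, (edist x y)⁻¹
      ≤ ENNReal.ofReal (8 * π * gridRadius n + 128 * n * (n + 1) * (gridRadius n ^ 2 * π)) := by
  have hr := gridRadius_pos (n := n) (by omega)
  have hx' := hx
  rw [gridBall_eq] at hx'
  have hfar : ∑ k ∈ Finset.univ.erase j, ∫⁻ y in gridBall n k, (edist x y)⁻¹
      ≤ ENNReal.ofReal (128 * n * (n + 1) * (gridRadius n ^ 2 * π)) := by
    calc ∑ k ∈ Finset.univ.erase j, ∫⁻ y in gridBall n k, (edist x y)⁻¹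
        ≤ ∑ k ∈ Finset.univ.erase j, ENNReal.ofReal
            ((dist (gridPt n j) (gridPt n k) - 2 * gridRadius n)⁻¹ * (gridRadius n ^ 2 * π)) := by
          refine Finset.sum_le_sum fun k hk ↦ ?_
          have h4r := four_mul_gridRadius_le_dist hn (Finset.ne_of_mem_erase hk).symm
          rw [gridBall_eq, ENNReal.ofReal_mul' (by positivity), ENNReal.ofReal_mul (by positivity),
            ENNReal.ofReal_pow hr.le, ← EuclideanSpace.volume_closedBall_fin_two, two_mul]
          exact setLIntegral_closedBall_inv_edist_le_of_dist hx' (by linarith)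
      _ = ENNReal.ofReal (∑ k ∈ Finset.univ.erase j,
            (dist (gridPt n j) (gridPt n k) - 2 * gridRadius n)⁻¹ * (gridRadius n ^ 2 * π)) := by
          refine (ENNReal.ofReal_sum_of_nonneg fun k hk ↦ ?_).symm
          have h4r := four_mul_gridRadius_le_dist hn (Finset.ne_of_mem_erase hk).symm
          have : 0 ≤ dist (gridPt n j) (gridPt n k) - 2 * gridRadius n := by linarith
          positivity
      _ ≤ ENNReal.ofReal (128 * n * (n + 1) * (gridRadius n ^ 2 * π)) := by
          rw [← Finset.sum_mul]
          gcongr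
          exact sum_inv_dist_gridPt_sub_le hn j
  rw [gridRegion, lintegral_iUnion (measurableSet_gridBall n) (pairwise_disjoint_gridBall hn),
    tsum_fintype, ← Finset.add_sum_erase _ _ (Finset.mem_univ j),
    ENNReal.ofReal_add (by positivity) (by positivity)]
  exact add_le_add (setLIntegral_gridBall_inv_edist_le (by omega) hx) hfar

theorem inv_volume_gridRegion_mul_le {n : ℕ} (hn : 2 ≤ n) :
    (volume (gridRegion n))⁻¹ *
        ENNReal.ofReal (8 * π * gridRadius n + 128 * n * (n + 1) * (gridRadius n ^ 2 * π))
      ≤ ENNReal.ofReal (16 * π + 192) := by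
  have hr := gridRadius_pos (n := n) (by omega)
  have hn' : (2 : ℝ) ≤ n := by exact_mod_cast hn
  have hsimp : (gridRadius n / 2)⁻¹ *
      (8 * π * gridRadius n + 128 * n * (n + 1) * (gridRadius n ^ 2 * π))
      = 16 * π + 128 * (n + 1) / n := by
    rw [gridRadius]; field_simp; ring
  rw [volume_gridRegion hn, ← ENNReal.ofReal_inv_of_pos (by positivity),
    ← ENNReal.ofReal_mul (by positivity), hsimp]
  refine ENNReal.ofReal_le_ofReal ?_
  rw [add_le_add_iff_left, div_le_iff₀ (by positivity)]
  linarith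

/-- Uniform 1-energy bound for the normalized area measure on the grid region. -/
theorem stmt17 : ∃ C : ℝ≥0∞, C < ⊤ ∧ ∀ n : ℕ, 2 ≤ n →
    (∫⁻ x, ∫⁻ y, (edist x y)⁻¹
        ∂((volume (gridRegion n))⁻¹ • volume.restrict (gridRegion n))
      ∂((volume (gridRegion n))⁻¹ • volume.restrict (gridRegion n))) ≤ C := by
  refine ⟨ENNReal.ofReal (16 * π + 192), ENNReal.ofReal_lt_top, fun n hn ↦ ?_⟩
  refine (lintegral_lintegral_normalized_restrict_le
    (MeasurableSet.iUnion (measurableSet_gridBall n)) fun x hx ↦ ?_).trans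
    (inv_volume_gridRegion_mul_le hn)
  obtain ⟨j, hj⟩ := mem_iUnion.mp hx
  exact lintegral_gridRegion_inv_edist_le hn hj
end
end
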